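/- arXiv:2101.08580 — 6 statements merged into one kernel-verified Lean document; each statement's English description precedes it below -/
import Mathlib

section
/- Let N be a binary unrooted phylogenetic network with a cherry {x,y}, and let N' be the network obtained by reducing the cherry {x,y} to a leaf z. Then N is the unique network (up to isomorphism fixing leaf labels) realizing its shortest distance matrix if and only if N' is the unique network realizing its shortest distance matrix. -/
open SimpleGraph

/-- The degree of a vertex (defined without decidability assumptions). -/
noncomputable def gdeg {V : Type} (G : SimpleGraph V) (v : V) : ℕ :=
  {u | G.Adj v u}.ncard

/-- The longest distance between two vertices: the supremum of the lengths of
paths between them. -/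
noncomputable def ldistV {V : Type} (G : SimpleGraph V) (u v : V) : ℕ :=
  sSup {n | ∃ p : G.Walk u v, p.IsPath ∧ p.length = n}

/-- A binary unrooted phylogenetic network on the leaf-label set `X`:
a simple connected graph whose degree-1 vertices (the leaves) are bijectively
labelled by `X`, every other vertex having degree 3, with at least two leaves. -/
structure PhyloNet (V X : Type) where
  G : SimpleGraph V
  conn : G.Connected
  leaf : X → V
  leafInj : Function.Injective leaf
  leafDeg : ∀ x : X, gdeg G (leaf x) = 1
  internalDeg : ∀ v : V, v ∉ Set.range leaf → gdeg G v = 3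
  leafSurj : ∀ v : V, gdeg G v = 1 → v ∈ Set.range leaf
  twoLeaves : Nontrivial X

namespace PhyloNet

variable {V W X : Type}

/-- Shortest distance between two leaves. -/
noncomputable def dm (N : PhyloNet V X) (x y : X) : ℕ :=
  N.G.dist (N.leaf x) (N.leaf y)

/-- Longest distance between two leaves. -/
noncomputable def dl (N : PhyloNet V X) (x y : X) : ℕ :=
  ldistV N.G (N.leaf x) (N.leaf y)

/-- Two networks on the same label set realize the same shortest distance matrix. -/
def SameDist (N : PhyloNet V X) (M : PhyloNet W X) : Prop :=
  ∀ x y : X, N.dm x y = M.dm x y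

/-- Two networks realize the same longest distance matrix. -/
def SameLDist (N : PhyloNet V X) (M : PhyloNet W X) : Prop :=
  ∀ x y : X, N.dl x y = M.dl x y

/-- Label-preserving isomorphism of networks. -/
def Isom (N : PhyloNet V X) (M : PhyloNet W X) : Prop :=
  ∃ φ : N.G ≃g M.G, ∀ x : X, φ (N.leaf x) = M.leaf x

/-- `N` is reconstructible from its shortest distance matrix. -/
def Reconstructible (N : PhyloNet V X) : Prop :=
  ∀ (W : Type) (M : PhyloNet W X), N.SameDist M → N.Isom M

/-- Two leaves form a cherry: they share a common neighbour. -/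
def Cherry (N : PhyloNet V X) (x y : X) : Prop :=
  x ≠ y ∧ ∃ v : V, N.G.Adj (N.leaf x) v ∧ N.G.Adj (N.leaf y) v

def NoCherry (N : PhyloNet V X) : Prop := ∀ x y : X, ¬ N.Cherry x y

/-- `uv` is a cut-edge. -/
def IsCutEdge (N : PhyloNet V X) (u v : V) : Prop :=
  N.G.Adj u v ∧ ¬ (N.G.deleteEdges {s(u, v)}).Reachable u v

/-- Leaf `x` lies on the `u`-side of the cut-edge `uv`. -/
def leafSide (N : PhyloNet V X) (u v : V) (x : X) : Prop :=
  (N.G.deleteEdges {s(u, v)}).Reachable (N.leaf x) u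

/-- `A` is a part of a cut-edge induced split of `N`. -/
def IsSplitPart (N : PhyloNet V X) (A : Set X) : Prop :=
  ∃ u v : V, N.IsCutEdge u v ∧ ∀ x : X, N.leafSide u v x ↔ x ∈ A

/-- Every cut-edge of `N` induces a unique split. -/
def UniqueSplits (N : PhyloNet V X) : Prop :=
  ∀ u v u' v' : V, N.IsCutEdge u v → N.IsCutEdge u' v' →
    ((∀ x : X, N.leafSide u v x ↔ N.leafSide u' v' x) ∨
      (∀ x : X, N.leafSide u v x ↔ N.leafSide v' u' x)) →
    s(u, v) = s(u', v')

/-- `l` is a chain of leaves: the neighbours of its members form a path. -/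
def IsChain (N : PhyloNet V X) (l : List X) : Prop :=
  l ≠ [] ∧ ∃ vs : List V, ∃ h : vs.length = l.length,
    vs.Nodup ∧ List.Chain' N.G.Adj vs ∧
    ∀ (i : ℕ) (hi : i < l.length),
      N.G.Adj (N.leaf (l.get ⟨i, hi⟩)) (vs.get ⟨i, by omega⟩)

/-- A maximal chain: not a subsequence of any other chain. -/
def MaxChain (N : PhyloNet V X) (l : List X) : Prop :=
  N.IsChain l ∧ ∀ m : List X, N.IsChain m → l.Sublist m → m = l

end PhyloNet

/-- A set of at least three vertices is 2-connected if it induces a connected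
graph that stays connected after removal of any single vertex. -/
def TwoConn {V : Type} (G : SimpleGraph V) (B : Set V) : Prop :=
  3 ≤ B.ncard ∧ (G.induce B).Connected ∧
    ∀ v ∈ B, (G.induce (B \ {v})).Connected

/-- A blob: a maximal 2-connected set of vertices (with at least three vertices). -/
def IsBlob {V : Type} (G : SimpleGraph V) (B : Set V) : Prop :=
  TwoConn G B ∧ ∀ C : Set V, TwoConn G C → B ⊆ C → C = B

/-- Number of edges with both endpoints in `B`. -/
noncomputable def edgesIn {V : Type} (G : SimpleGraph V) (B : Set V) : ℕ :=
  {e : Sym2 V | e ∈ G.edgeSet ∧ ∀ v ∈ e, v ∈ B}.ncard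

/-- `G` is a level-(≤ k) network: every blob has cycle rank at most `k`,
i.e. removing at most `k` edges from each blob yields a tree. -/
def LevelLE {V : Type} (G : SimpleGraph V) (k : ℕ) : Prop :=
  ∀ B : Set V, IsBlob G B → edgesIn G B ≤ (B.ncard - 1) + k

namespace PhyloNet

variable {V X : Type}

/-- A trivial cut-edge is one incident to a leaf. -/
def TrivialCutEdge (N : PhyloNet V X) (u v : V) : Prop :=
  u ∈ Set.range N.leaf ∨ v ∈ Set.range N.leaf

/-- A pendant blob: a blob incident to exactly one non-trivial cut-edge. -/
def IsPendantBlob (N : PhyloNet V X) (B : Set V) : Prop :=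
  IsBlob N.G B ∧
    ∃! e : Sym2 V, ∃ u v : V, e = s(u, v) ∧ u ∈ B ∧ v ∉ B ∧
      N.G.Adj u v ∧ ¬ N.TrivialCutEdge u v

/-- The leaves attached to (contained in) a blob. -/
def blobLeaves (N : PhyloNet V X) (B : Set V) : Set X :=
  {x : X | ∃ u ∈ B, N.G.Adj (N.leaf x) u}

/-- `N` has a leaf on each generator side: every vertex is within shortest
distance 2 of some leaf. -/
def LeafOnEachGenSide (N : PhyloNet V X) : Prop :=
  ∀ v : V, ∃ x : X, N.G.dist v (N.leaf x) ≤ 2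

end PhyloNet

/-!
Reducing the cherry `{x, y}` of `N` and attaching a cherry at the leaf `z` of `N'` are inverse
operations, and attaching a cherry transports shortest distances (a distance from `x` or `y` is the
distance from `z` plus one) as well as label-preserving isomorphisms (these fix `x` and `y`, hence
restrict to the reduced networks). A network `M` realizing `D(N)` has `d(x, y) = 2`, so `{x, y}` is
a cherry of `M` too, and its reduction realizes `D(N')`. Hence the realizations of `D(N)` and of
`D(N')` correspond up to isomorphism.
-/

namespace SimpleGraph

variable {V W W' : Type} {G : SimpleGraph V} {G' : SimpleGraph W}

theorem gdeg_eq_ncard_neighborSet (v : V) : gdeg G v = (G.neighborSet v).ncard := rfl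

theorem gdeg_ne_one_of_adj_of_adj {u a b : V} (hab : a ≠ b) (ha : G.Adj u a) (hb : G.Adj u b) :
    gdeg G u ≠ 1 := by
  intro h
  rw [gdeg_eq_ncard_neighborSet] at h
  obtain ⟨c, hc⟩ := Set.ncard_eq_one.mp h
  have ha' : a ∈ G.neighborSet u := ha
  have hb' : b ∈ G.neighborSet u := hb
  rw [hc] at ha' hb'
  exact hab (ha'.trans hb'.symm)

theorem Iso.gdeg_apply (e : G ≃g G') (v : V) : gdeg G' (e v) = gdeg G v := by
  have : G'.neighborSet (e v) = e '' G.neighborSet v := by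
    ext w
    simp only [Set.mem_image, mem_neighborSet]
    refine ⟨fun h => ⟨e.symm w, ?_, e.apply_symm_apply w⟩, ?_⟩
    · rwa [← e.map_adj_iff, e.apply_symm_apply]
    · rintro ⟨u, hu, rfl⟩
      exact e.map_adj_iff.mpr hu
  rw [gdeg_eq_ncard_neighborSet, this, Set.ncard_image_of_injective _ e.injective]
  rfl

theorem Connected.dist_map_le (hG : G.Connected) (f : G →g G') (u v : V) :
    G'.dist (f u) (f v) ≤ G.dist u v := by
  obtain ⟨p, hp⟩ := hG.exists_walk_length_eq_dist u v
  rw [← hp, ← Walk.length_map f]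
  exact dist_le _

theorem Iso.dist_apply (e : G ≃g G') (hG : G.Connected) (u v : V) :
    G'.dist (e u) (e v) = G.dist u v := by
  refine le_antisymm (hG.dist_map_le e.toHom u v) ?_
  simpa using (e.connected_iff.mp hG).dist_map_le e.symm.toHom (e u) (e v)

def cherryGraph (H : SimpleGraph W) (z : W) : SimpleGraph (W ⊕ Bool) where
  Adj
    | .inl a, .inl b => H.Adj a b
    | .inl a, .inr _ => a = z
    | .inr _, .inl b => b = z
    | .inr _, .inr _ => False
  symm := by
    constructor
    rintro (a | i) (b | j) h
    exacts [h.symm, h, h, h]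
  loopless := by
    constructor
    rintro (a | i) h
    exacts [H.loopless.irrefl a h, h]

variable {H : SimpleGraph W} {H' : SimpleGraph W'} {z : W} {z' : W'}

@[simp] theorem cherryGraph_adj_inl_inl {a b : W} :
    (H.cherryGraph z).Adj (.inl a) (.inl b) ↔ H.Adj a b := .rfl

@[simp] theorem cherryGraph_adj_inl_inr {a : W} {i : Bool} :
    (H.cherryGraph z).Adj (.inl a) (.inr i) ↔ a = z := .rfl

@[simp] theorem cherryGraph_adj_inr_inl {b : W} {i : Bool} :
    (H.cherryGraph z).Adj (.inr i) (.inl b) ↔ b = z := .rfl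

@[simp] theorem cherryGraph_not_adj_inr_inr {i j : Bool} :
    ¬ (H.cherryGraph z).Adj (.inr i) (.inr j) := id

theorem cherryGraph_adj_inr {i : Bool} {p : W ⊕ Bool} :
    (H.cherryGraph z).Adj (.inr i) p ↔ p = .inl z := by
  rcases p with b | j <;> simp

def inlCherryGraph (H : SimpleGraph W) (z : W) : H ↪g H.cherryGraph z where
  toFun := Sum.inl
  inj' := Sum.inl_injective
  map_rel_iff' := .rfl

def cherryBase (z : W) : W ⊕ Bool → W := Sum.elim id fun _ => z

@[simp] theorem cherryBase_inl (a : W) : cherryBase z (.inl a) = a := rfl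

@[simp] theorem cherryBase_inr (i : Bool) : cherryBase z (.inr i) = z := rfl

theorem Walk.exists_cherryBase_length_le {p q : W ⊕ Bool} (w : (H.cherryGraph z).Walk p q) :
    ∃ w' : H.Walk (cherryBase z p) (cherryBase z q), w'.length ≤ w.length := by
  induction w with
  | nil => exact ⟨.nil, le_rfl⟩
  | @cons p q r h w ih =>
    obtain ⟨w', hw'⟩ := ih
    rcases p with a | i <;> rcases q with b | j
    · exact ⟨.cons (show H.Adj a b from h) w', Nat.succ_le_succ hw'⟩
    · obtain rfl : a = z := h
      exact ⟨w', Nat.le_succ_of_le hw'⟩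
    · obtain rfl : b = z := h
      exact ⟨w', Nat.le_succ_of_le hw'⟩
    · exact h.elim

theorem Reachable.cherryBase {p q : W ⊕ Bool} (h : (H.cherryGraph z).Reachable p q) :
    H.Reachable (cherryBase z p) (cherryBase z q) :=
  let ⟨w⟩ := h
  let ⟨w', _⟩ := w.exists_cherryBase_length_le
  ⟨w'⟩

theorem connected_cherryGraph_iff : (H.cherryGraph z).Connected ↔ H.Connected := by
  constructor
  · intro h
    have : Nonempty W := ⟨z⟩
    exact ⟨fun a b => (h (.inl a) (.inl b)).cherryBase⟩
  · intro h
    have hz : ∀ p, (H.cherryGraph z).Reachable (.inl z) p := by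
      rintro (a | i)
      · exact (h z a).map (inlCherryGraph H z).toHom
      · exact Adj.reachable (by simp)
    exact ⟨fun p q => (hz p).symm.trans (hz q)⟩

theorem dist_cherryGraph_inl_inl (hH : H.Connected) (a b : W) :
    (H.cherryGraph z).dist (.inl a) (.inl b) = H.dist a b := by
  refine le_antisymm (hH.dist_map_le (inlCherryGraph H z).toHom a b) ?_
  obtain ⟨w, hw⟩ := (connected_cherryGraph_iff.mpr hH).exists_walk_length_eq_dist
    (.inl a : W ⊕ Bool) (.inl b)
  obtain ⟨w', hw'⟩ := w.exists_cherryBase_length_le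
  exact (dist_le w').trans (hw ▸ hw')

theorem dist_cherryGraph_inr_inl (hH : H.Connected) (i : Bool) (a : W) :
    (H.cherryGraph z).dist (.inr i) (.inl a) = H.dist z a + 1 := by
  apply le_antisymm
  · obtain ⟨w, hw⟩ := hH.exists_walk_length_eq_dist z a
    have h : (H.cherryGraph z).Adj (.inr i) (.inl z) := by simp
    let w₁ : (H.cherryGraph z).Walk (.inl z) (.inl a) := w.map (inlCherryGraph H z).toHom
    have h₁ : w₁.length = H.dist z a := (Walk.length_map _ _).trans hw
    simpa [h₁] using dist_le (.cons h w₁)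
  · obtain ⟨w, hw⟩ := (connected_cherryGraph_iff.mpr hH).exists_walk_length_eq_dist
      (.inr i : W ⊕ Bool) (.inl a)
    cases w with
    | cons h w =>
      have hu := (cherryGraph_adj_inr (H := H) (z := z)).mp h
      subst hu
      obtain ⟨w', hw'⟩ := w.exists_cherryBase_length_le
      have := dist_le w'
      simp only [cherryBase_inl, Walk.length_cons] at hw hw' this
      omega

theorem dist_cherryGraph_inr_inr {i j : Bool} (hij : i ≠ j) :
    (H.cherryGraph z).dist (.inr i) (.inr j) = 2 := by
  have h : (H.cherryGraph z).edist (.inr i) (.inr j) = 2 :=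
    edist_eq_two_iff.mpr ⟨by simpa using hij, by simp, ⟨.inl z, by simp [mem_commonNeighbors]⟩⟩
  simp [dist, h]

open Classical in
theorem dist_cherryGraph (hH : H.Connected) (p q : W ⊕ Bool) :
    (H.cherryGraph z).dist p q = if p = q then 0 else
      H.dist (cherryBase z p) (cherryBase z q) + p.isRight.toNat + q.isRight.toNat := by
  split_ifs with hpq
  · rw [hpq, dist_self]
  rcases p with a | i <;> rcases q with b | j
  · simp [dist_cherryGraph_inl_inl hH]
  · rw [dist_comm, dist_cherryGraph_inr_inl hH, H.dist_comm]
    simp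
  · simp [dist_cherryGraph_inr_inl hH]
  · simp [dist_cherryGraph_inr_inr (by simpa using hpq)]

theorem neighborSet_cherryGraph_inr (i : Bool) :
    (H.cherryGraph z).neighborSet (.inr i) = {.inl z} := by
  ext p
  exact cherryGraph_adj_inr

theorem neighborSet_cherryGraph_inl_of_ne {a : W} (ha : a ≠ z) :
    (H.cherryGraph z).neighborSet (.inl a) = .inl '' H.neighborSet a := by
  ext (b | j) <;> simp [ha]

theorem neighborSet_cherryGraph_inl_self :
    (H.cherryGraph z).neighborSet (.inl z) = .inl '' H.neighborSet z ∪ {.inr true, .inr false} := by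
  ext (b | _ | _) <;> simp

theorem gdeg_cherryGraph_inr (i : Bool) : gdeg (H.cherryGraph z) (.inr i) = 1 := by
  rw [gdeg_eq_ncard_neighborSet, neighborSet_cherryGraph_inr, Set.ncard_singleton]

theorem gdeg_cherryGraph_inl_of_ne {a : W} (ha : a ≠ z) :
    gdeg (H.cherryGraph z) (.inl a) = gdeg H a := by
  rw [gdeg_eq_ncard_neighborSet, neighborSet_cherryGraph_inl_of_ne ha,
    Set.ncard_image_of_injective _ Sum.inl_injective, gdeg_eq_ncard_neighborSet]

theorem finite_neighborSet_of_cherryGraph (h : ((H.cherryGraph z).neighborSet (.inl z)).Finite) :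
    (H.neighborSet z).Finite :=
  h.preimage (f := Sum.inl) Sum.inl_injective.injOn

theorem gdeg_cherryGraph_inl_self (hz : (H.neighborSet z).Finite) :
    gdeg (H.cherryGraph z) (.inl z) = gdeg H z + 2 := by
  rw [gdeg_eq_ncard_neighborSet, neighborSet_cherryGraph_inl_self,
    Set.ncard_union_eq (by simp [Set.disjoint_left]) (hz.image _),
    Set.ncard_image_of_injective _ Sum.inl_injective, Set.ncard_pair (by simp),
    gdeg_eq_ncard_neighborSet]

def Iso.cherryGraph (φ : H ≃g H') (hz : φ z = z') : H.cherryGraph z ≃g H'.cherryGraph z' where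
  toEquiv := Equiv.sumCongr φ.toEquiv (Equiv.refl Bool)
  map_rel_iff' := by
    rintro (a | i) (b | j)
    · exact φ.map_adj_iff
    · exact (hz ▸ φ.injective.eq_iff : φ a = z' ↔ a = z)
    · exact (hz ▸ φ.injective.eq_iff : φ b = z' ↔ b = z)
    · exact .rfl

@[simp] theorem Iso.cherryGraph_apply_inl (φ : H ≃g H') (hz : φ z = z') (a : W) :
    φ.cherryGraph hz (.inl a) = .inl (φ a) := rfl

@[simp] theorem Iso.cherryGraph_apply_inr (φ : H ≃g H') (hz : φ z = z') (i : Bool) :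
    φ.cherryGraph hz (.inr i) = .inr i := rfl

section Restrict

variable (φ : H.cherryGraph z ≃g H'.cherryGraph z') (hφ : ∀ i, φ (.inr i) = .inr i)
include hφ

theorem Iso.isLeft_apply_inl (a : W) : (φ (.inl a)).isLeft := by
  rcases h : φ (.inl a) with b | i
  · rfl
  · rw [← hφ i] at h
    exact absurd (φ.injective h) Sum.inl_ne_inr

theorem Iso.symm_apply_inr (i : Bool) : φ.symm (.inr i) = .inr i := by
  rw [RelIso.symm_apply_eq, hφ]

def Iso.ofCherryGraph : H ≃g H' where
  toFun a := (φ (.inl a)).getLeft (φ.isLeft_apply_inl hφ a)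
  invFun b := (φ.symm (.inl b)).getLeft (φ.symm.isLeft_apply_inl (φ.symm_apply_inr hφ) b)
  left_inv a := by simp
  right_inv b := by simp
  map_rel_iff' {a b} := by
    rw [← cherryGraph_adj_inl_inl (z := z'), Equiv.coe_fn_mk, Sum.inl_getLeft, Sum.inl_getLeft,
      φ.map_adj_iff, cherryGraph_adj_inl_inl]

theorem Iso.inl_ofCherryGraph (a : W) : .inl (φ.ofCherryGraph hφ a) = φ (.inl a) :=
  Sum.inl_getLeft _ _

theorem Iso.apply_inl_self : φ (.inl z) = .inl z' := by
  refine (cherryGraph_adj_inr (H := H') (i := true)).mp ?_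
  rw [← hφ true, φ.map_adj_iff]
  simp

end Restrict

end SimpleGraph

namespace PhyloNet

variable {V W W' X : Type}

section Isom

variable {N : PhyloNet V X} {M : PhyloNet W X} {K : PhyloNet W' X}

theorem Isom.symm (h : N.Isom M) : M.Isom N := by
  obtain ⟨φ, hφ⟩ := h
  exact ⟨φ.symm, fun a => by rw [RelIso.symm_apply_eq, hφ]⟩

theorem Isom.trans (h₁ : N.Isom M) (h₂ : M.Isom K) : N.Isom K := by
  obtain ⟨φ, hφ⟩ := h₁
  obtain ⟨ψ, hψ⟩ := h₂
  exact ⟨φ.trans ψ, fun a => by rw [RelIso.trans_apply, hφ, hψ]⟩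

theorem Isom.dm_eq (h : N.Isom M) (a b : X) : N.dm a b = M.dm a b := by
  obtain ⟨φ, hφ⟩ := h
  rw [dm, dm, ← hφ, ← hφ, φ.dist_apply N.conn]

theorem Reconstructible.of_isom (hN : N.Reconstructible) (h : N.Isom M) : M.Reconstructible :=
  fun _ K hK => h.symm.trans (hN _ K fun a b => (h.dm_eq a b).trans (hK a b))

theorem Isom.reconstructible_iff (h : N.Isom M) : N.Reconstructible ↔ M.Reconstructible :=
  ⟨fun hN => hN.of_isom h, fun hM => hM.of_isom h.symm⟩

end Isom

theorem exists_adj_adj_of_dm_eq_two (M : PhyloNet W X) {x y : X} (h : M.dm x y = 2) :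
    ∃ w, M.G.Adj (M.leaf x) w ∧ M.G.Adj (M.leaf y) w := by
  have h' : M.G.edist (M.leaf x) (M.leaf y) = 2 := by
    rw [← (M.conn (M.leaf x) (M.leaf y)).coe_dist_eq_edist]
    exact_mod_cast h
  obtain ⟨-, -, w, hw⟩ := edist_eq_two_iff.mp h'
  exact ⟨w, (M.G.mem_commonNeighbors).mp hw⟩

section AttachCherry

variable {x y : X}

open Classical in
/-- `inr ()` is the label of the leaf `z` that replaces the cherry `{x, y}`. -/
noncomputable def cherryLabel (x y a : X) : {a : X // a ≠ x ∧ a ≠ y} ⊕ Unit :=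
  if h : a ≠ x ∧ a ≠ y then .inl ⟨a, h⟩ else .inr ()

theorem cherryLabel_val (r : {a : X // a ≠ x ∧ a ≠ y}) : cherryLabel x y r.1 = .inl r :=
  dif_pos r.2

theorem cherryLabel_left : cherryLabel x y x = .inr () := dif_neg (by simp)

theorem cherryLabel_right : cherryLabel x y y = .inr () := dif_neg (by simp)

theorem cherryLabel_eq_inl_iff {a : X} {r : {a : X // a ≠ x ∧ a ≠ y}} :
    cherryLabel x y a = .inl r ↔ a = r.1 := by
  constructor
  · intro h
    unfold cherryLabel at h
    split_ifs at h
    simp only [Sum.inl.injEq] at h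
    rw [← h]
  · rintro rfl
    exact cherryLabel_val r

theorem cherryLabel_eq_inr_iff {a : X} : cherryLabel x y a = .inr () ↔ a = x ∨ a = y := by
  unfold cherryLabel
  split_ifs with h <;> simp only [false_iff, true_iff] <;> tauto

theorem cherryLabel_surjective : Function.Surjective (cherryLabel x y) := by
  rintro (r | ⟨⟩)
  exacts [⟨r.1, cherryLabel_val r⟩, ⟨x, cherryLabel_left⟩]

variable (Q : PhyloNet W ({a : X // a ≠ x ∧ a ≠ y} ⊕ Unit))

open Classical in
noncomputable def cherryLeaf (a : X) : W ⊕ Bool :=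
  (cherryLabel x y a).elim (fun r => .inl (Q.leaf (.inl r))) fun _ => .inr (decide (a = x))

theorem cherryLeaf_val (r : {a : X // a ≠ x ∧ a ≠ y}) :
    Q.cherryLeaf r.1 = .inl (Q.leaf (.inl r)) := by
  simp [cherryLeaf, cherryLabel_val]

theorem cherryLeaf_left : Q.cherryLeaf x = .inr true := by
  simp [cherryLeaf, cherryLabel_left]

theorem cherryLeaf_right (hxy : x ≠ y) : Q.cherryLeaf y = .inr false := by
  simp [cherryLeaf, cherryLabel_right, hxy.symm]

theorem cherryBase_cherryLeaf (a : X) :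
    cherryBase (Q.leaf (.inr ())) (Q.cherryLeaf a) = Q.leaf (cherryLabel x y a) := by
  unfold cherryLeaf
  rcases cherryLabel x y a with r | ⟨⟩ <;> rfl

theorem isRight_cherryLeaf (a : X) : (Q.cherryLeaf a).isRight = (cherryLabel x y a).isRight := by
  unfold cherryLeaf
  rcases cherryLabel x y a with r | ⟨⟩ <;> rfl

theorem cherryLeaf_injective : Function.Injective Q.cherryLeaf := by
  intro a b h
  rcases ha : cherryLabel x y a with r | ⟨⟩ <;> rcases hb : cherryLabel x y b with s | ⟨⟩ <;>
    simp only [cherryLeaf, ha, hb, Sum.elim_inl, Sum.elim_inr, Sum.inl.injEq, Sum.inr.injEq,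
      reduceCtorEq] at h
  · obtain rfl := Sum.inl_injective (Q.leafInj h)
    rw [cherryLabel_eq_inl_iff.mp ha, cherryLabel_eq_inl_iff.mp hb]
  · rw [cherryLabel_eq_inr_iff] at ha hb
    simp only [decide_eq_decide] at h
    grind

theorem inl_mem_range_cherryLeaf_iff {w : W} (hw : w ≠ Q.leaf (.inr ())) :
    .inl w ∈ Set.range Q.cherryLeaf ↔ w ∈ Set.range Q.leaf := by
  constructor
  · rintro ⟨a, ha⟩
    rw [← cherryBase_inl (z := Q.leaf (.inr ())) w, ← ha, cherryBase_cherryLeaf]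
    exact Set.mem_range_self _
  · rintro ⟨r | ⟨⟩, rfl⟩
    exacts [⟨r.1, Q.cherryLeaf_val r⟩, absurd rfl hw]

theorem inr_mem_range_cherryLeaf (hxy : x ≠ y) (i : Bool) : .inr i ∈ Set.range Q.cherryLeaf := by
  cases i
  exacts [⟨y, Q.cherryLeaf_right hxy⟩, ⟨x, Q.cherryLeaf_left⟩]

theorem gdeg_cherryGraph_leaf :
    gdeg (Q.G.cherryGraph (Q.leaf (.inr ()))) (.inl (Q.leaf (.inr ()))) = 3 := by
  have hfin := Set.finite_of_ncard_ne_zero (s := Q.G.neighborSet (Q.leaf (.inr ())))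
    (by rw [← gdeg_eq_ncard_neighborSet, Q.leafDeg]; exact one_ne_zero)
  rw [gdeg_cherryGraph_inl_self hfin, Q.leafDeg]

noncomputable def attachCherry (hxy : x ≠ y) : PhyloNet (W ⊕ Bool) X where
  G := Q.G.cherryGraph (Q.leaf (.inr ()))
  conn := connected_cherryGraph_iff.mpr Q.conn
  leaf := Q.cherryLeaf
  leafInj := Q.cherryLeaf_injective
  leafDeg a := by
    rcases h : cherryLabel x y a with r | ⟨⟩
    · rw [cherryLabel_eq_inl_iff.mp h, cherryLeaf_val,
        gdeg_cherryGraph_inl_of_ne (Q.leafInj.ne Sum.inl_ne_inr), Q.leafDeg]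
    · rcases cherryLabel_eq_inr_iff.mp h with rfl | rfl
      · rw [cherryLeaf_left, gdeg_cherryGraph_inr]
      · rw [cherryLeaf_right Q hxy, gdeg_cherryGraph_inr]
  internalDeg := by
    rintro (w | i) hp
    · by_cases hw : w = Q.leaf (.inr ())
      · rw [hw, gdeg_cherryGraph_leaf]
      · rw [gdeg_cherryGraph_inl_of_ne hw]
        exact Q.internalDeg w ((Q.inl_mem_range_cherryLeaf_iff hw).not.mp hp)
    · exact absurd (Q.inr_mem_range_cherryLeaf hxy i) hp
  leafSurj := by
    rintro (w | i) hp
    · by_cases hw : w = Q.leaf (.inr ())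
      · rw [hw, gdeg_cherryGraph_leaf] at hp
        exact absurd hp (by decide)
      · rw [gdeg_cherryGraph_inl_of_ne hw] at hp
        exact (Q.inl_mem_range_cherryLeaf_iff hw).mpr (Q.leafSurj w hp)
    · exact Q.inr_mem_range_cherryLeaf hxy i
  twoLeaves := ⟨x, y, hxy⟩

variable (hxy : x ≠ y)

open Classical in
theorem dm_attachCherry (a b : X) :
    (Q.attachCherry hxy).dm a b = if a = b then 0 else
      Q.dm (cherryLabel x y a) (cherryLabel x y b) +
        (cherryLabel x y a).isRight.toNat + (cherryLabel x y b).isRight.toNat := by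
  simp only [dm, attachCherry, dist_cherryGraph Q.conn, Q.cherryLeaf_injective.eq_iff,
    cherryBase_cherryLeaf, isRight_cherryLeaf]

theorem dm_attachCherry_left_right : (Q.attachCherry hxy).dm x y = 2 := by
  rw [dm_attachCherry, if_neg hxy, cherryLabel_left, cherryLabel_right]
  simp [dm]

end AttachCherry

section AttachCherryCompat

variable {x y : X} (hxy : x ≠ y) {Q : PhyloNet W ({a : X // a ≠ x ∧ a ≠ y} ⊕ Unit)}
  {Q' : PhyloNet W' ({a : X // a ≠ x ∧ a ≠ y} ⊕ Unit)}

include hxy in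
theorem attachCherry_sameDist_iff :
    (Q.attachCherry hxy).SameDist (Q'.attachCherry hxy) ↔ Q.SameDist Q' := by
  constructor
  · intro h p q
    by_cases hpq : p = q
    · simp [hpq, dm]
    obtain ⟨a, rfl⟩ := cherryLabel_surjective p
    obtain ⟨b, rfl⟩ := cherryLabel_surjective q
    have hab := h a b
    have hab' : a ≠ b := ne_of_apply_ne _ hpq
    rw [dm_attachCherry, dm_attachCherry, if_neg hab', if_neg hab'] at hab
    omega
  · intro h a b
    rw [dm_attachCherry, dm_attachCherry, h]

theorem Isom.attachCherry (h : Q.Isom Q') : (Q.attachCherry hxy).Isom (Q'.attachCherry hxy) := by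
  obtain ⟨φ, hφ⟩ := h
  refine ⟨φ.cherryGraph (hφ (.inr ())), fun a => ?_⟩
  change φ.cherryGraph _ (Q.cherryLeaf a) = Q'.cherryLeaf a
  unfold cherryLeaf
  rcases cherryLabel x y a with r | ⟨⟩ <;> simp [hφ]

theorem Isom.of_attachCherry (h : (Q.attachCherry hxy).Isom (Q'.attachCherry hxy)) :
    Q.Isom Q' := by
  obtain ⟨φ, hφ⟩ := h
  let ψ : Q.G.cherryGraph (Q.leaf (.inr ())) ≃g Q'.G.cherryGraph (Q'.leaf (.inr ())) := φ
  have hψ : ∀ a, ψ (Q.cherryLeaf a) = Q'.cherryLeaf a := hφ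
  have hinr : ∀ i, ψ (.inr i) = .inr i := by
    rintro (_ | _)
    · simpa [cherryLeaf_right _ hxy] using hψ y
    · simpa [cherryLeaf_left] using hψ x
  refine ⟨ψ.ofCherryGraph hinr, fun l => Sum.inl_injective (β := Bool) ?_⟩
  rw [Iso.inl_ofCherryGraph]
  rcases l with r | ⟨⟩
  · rw [← cherryLeaf_val, ← cherryLeaf_val]
    exact hψ r.1
  · exact ψ.apply_inl_self hinr

theorem attachCherry_isom_iff : (Q.attachCherry hxy).Isom (Q'.attachCherry hxy) ↔ Q.Isom Q' :=
  ⟨Isom.of_attachCherry hxy, fun h => h.attachCherry hxy⟩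

end AttachCherryCompat

section Reduce

variable (P : PhyloNet V X) {x y : X} {v : V}

theorem leaf_adj_iff (hx : P.G.Adj (P.leaf x) v) {u : V} : P.G.Adj (P.leaf x) u ↔ u = v := by
  refine ⟨fun hu => ?_, fun h => h ▸ hx⟩
  by_contra h
  exact gdeg_ne_one_of_adj_of_adj h hu hx (P.leafDeg x)

theorem adj_leaf_iff (hx : P.G.Adj (P.leaf x) v) {u : V} : P.G.Adj u (P.leaf x) ↔ u = v :=
  (P.G.adj_comm _ _).trans (P.leaf_adj_iff hx)

def cherryVertex (x y : X) : {w : V | w ≠ P.leaf x ∧ w ≠ P.leaf y} ⊕ Bool → V :=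
  Sum.elim Subtype.val fun i => cond i (P.leaf x) (P.leaf y)

@[simp] theorem cherryVertex_inl (u : {w : V | w ≠ P.leaf x ∧ w ≠ P.leaf y}) :
    P.cherryVertex x y (.inl u) = u := rfl

@[simp] theorem cherryVertex_inr_true : P.cherryVertex x y (.inr true) = P.leaf x := rfl

@[simp] theorem cherryVertex_inr_false : P.cherryVertex x y (.inr false) = P.leaf y := rfl

theorem cherryVertex_injective (hxy : x ≠ y) : Function.Injective (P.cherryVertex x y) := by
  rintro (a | (_ | _)) (b | (_ | _)) h <;>
    simp only [cherryVertex_inl, cherryVertex_inr_true, cherryVertex_inr_false] at h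
  all_goals first
    | rfl
    | exact congrArg _ (Subtype.ext h)
    | exact absurd h a.2.1 | exact absurd h a.2.2
    | exact absurd h.symm b.2.1 | exact absurd h.symm b.2.2
    | exact absurd (P.leafInj h) hxy | exact absurd (P.leafInj h).symm hxy

theorem cherryVertex_surjective : Function.Surjective (P.cherryVertex x y) := by
  intro u
  by_cases hux : u = P.leaf x
  · exact ⟨.inr true, hux.symm⟩
  by_cases huy : u = P.leaf y
  · exact ⟨.inr false, huy.symm⟩
  exact ⟨.inl ⟨u, hux, huy⟩, rfl⟩

variable (hxy : x ≠ y) (hx : P.G.Adj (P.leaf x) v) (hy : P.G.Adj (P.leaf y) v)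
include hxy hx hy

theorem notMem_range_leaf_of_cherry : v ∉ Set.range P.leaf := by
  rintro ⟨a, rfl⟩
  exact gdeg_ne_one_of_adj_of_adj (P.leafInj.ne hxy) hx.symm hy.symm (P.leafDeg a)

theorem cherryVertex_adj_iff {z : {w : V | w ≠ P.leaf x ∧ w ≠ P.leaf y}} (hz : z.val = v)
    (p q : {w : V | w ≠ P.leaf x ∧ w ≠ P.leaf y} ⊕ Bool) :
    P.G.Adj (P.cherryVertex x y p) (P.cherryVertex x y q) ↔
      ((P.G.induce {w : V | w ≠ P.leaf x ∧ w ≠ P.leaf y}).cherryGraph z).Adj p q := by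
  have hv : z.val ∉ Set.range P.leaf := hz ▸ P.notMem_range_leaf_of_cherry hxy hx hy
  rcases p with a | (_ | _) <;> rcases q with b | (_ | _) <;>
    simp only [cherryVertex_inl, cherryVertex_inr_true, cherryVertex_inr_false,
      cherryGraph_adj_inl_inl, cherryGraph_adj_inl_inr, cherryGraph_adj_inr_inl,
      cherryGraph_not_adj_inr_inr, comap_adj, Function.Embedding.coe_subtype, iff_false,
      P.leaf_adj_iff hx, P.leaf_adj_iff hy, P.adj_leaf_iff hx, P.adj_leaf_iff hy, ← hz,
      Subtype.ext_iff]
  all_goals exact fun h => hv ⟨_, h⟩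

/-- `P` is recovered from its cherry reduction by attaching the cherry again. -/
noncomputable def cherryGraphIso {H : SimpleGraph {w : V | w ≠ P.leaf x ∧ w ≠ P.leaf y}}
    (hH : H = P.G.induce {w : V | w ≠ P.leaf x ∧ w ≠ P.leaf y})
    {z : {w : V | w ≠ P.leaf x ∧ w ≠ P.leaf y}} (hz : z.val = v) : H.cherryGraph z ≃g P.G where
  toEquiv := .ofBijective _ ⟨P.cherryVertex_injective hxy, P.cherryVertex_surjective⟩
  map_rel_iff' {p q} := by
    subst hH
    exact P.cherryVertex_adj_iff hxy hx hy hz p q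

theorem isom_attachCherry
    (Q : PhyloNet {w : V | w ≠ P.leaf x ∧ w ≠ P.leaf y} ({a : X // a ≠ x ∧ a ≠ y} ⊕ Unit))
    (hG : Q.G = P.G.induce {w : V | w ≠ P.leaf x ∧ w ≠ P.leaf y})
    (hleaf : ∀ a : {a : X // a ≠ x ∧ a ≠ y}, (Q.leaf (.inl a) : V) = P.leaf a.1)
    (hz : (Q.leaf (.inr ()) : V) = v) :
    P.Isom (Q.attachCherry hxy) := by
  refine ⟨(P.cherryGraphIso hxy hx hy hG hz).symm, fun a => (RelIso.symm_apply_eq _).mpr ?_⟩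
  change P.leaf a = P.cherryVertex x y (Q.cherryLeaf a)
  unfold cherryLeaf
  rcases h : cherryLabel x y a with r | ⟨⟩
  · simp [hleaf, cherryLabel_eq_inl_iff.mp h]
  · rcases cherryLabel_eq_inr_iff.mp h with rfl | rfl <;> simp [hxy.symm]

theorem gdeg_induce_of_ne {u : {w : V | w ≠ P.leaf x ∧ w ≠ P.leaf y}} (hu : u.val ≠ v) :
    gdeg (P.G.induce {w : V | w ≠ P.leaf x ∧ w ≠ P.leaf y}) u = gdeg P.G u := by
  have hz : u ≠ ⟨v, hx.ne', hy.ne'⟩ := fun h => hu (congrArg Subtype.val h)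
  rw [← gdeg_cherryGraph_inl_of_ne hz, ← (P.cherryGraphIso hxy hx hy rfl rfl).gdeg_apply]
  rfl

theorem gdeg_induce_cherry :
    gdeg (P.G.induce {w : V | w ≠ P.leaf x ∧ w ≠ P.leaf y}) ⟨v, hx.ne', hy.ne'⟩ = 1 := by
  have h3 := (P.cherryGraphIso hxy hx hy rfl (z := ⟨v, hx.ne', hy.ne'⟩) rfl).gdeg_apply
    (.inl ⟨v, hx.ne', hy.ne'⟩)
  have hv : gdeg P.G v = 3 := P.internalDeg v (P.notMem_range_leaf_of_cherry hxy hx hy)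
  change gdeg P.G v = _ at h3
  have hfin := finite_neighborSet_of_cherryGraph (Set.finite_of_ncard_ne_zero
    (by rw [← gdeg_eq_ncard_neighborSet, ← h3, hv]; exact three_ne_zero))
  rw [gdeg_cherryGraph_inl_self hfin, hv] at h3
  omega

noncomputable def reduceCherry (hL : Nontrivial ({a : X // a ≠ x ∧ a ≠ y} ⊕ Unit)) :
    PhyloNet {w : V | w ≠ P.leaf x ∧ w ≠ P.leaf y} ({a : X // a ≠ x ∧ a ≠ y} ⊕ Unit) where
  G := P.G.induce {w : V | w ≠ P.leaf x ∧ w ≠ P.leaf y}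
  conn := connected_cherryGraph_iff.mp
    ((P.cherryGraphIso hxy hx hy rfl (z := ⟨v, hx.ne', hy.ne'⟩) rfl).connected_iff.mpr P.conn)
  leaf := Sum.elim (fun r => ⟨P.leaf r.1, P.leafInj.ne r.2.1, P.leafInj.ne r.2.2⟩)
    fun _ => ⟨v, hx.ne', hy.ne'⟩
  leafInj := by
    have hv := P.notMem_range_leaf_of_cherry hxy hx hy
    rintro (r | ⟨⟩) (s | ⟨⟩) h <;> simp only [Sum.elim_inl, Sum.elim_inr, Subtype.mk.injEq] at h
    · rw [Subtype.ext (P.leafInj h)]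
    · exact absurd ⟨_, h⟩ hv
    · exact absurd ⟨_, h.symm⟩ hv
    · rfl
  leafDeg := by
    rintro (r | ⟨⟩)
    · rw [Sum.elim_inl, P.gdeg_induce_of_ne hxy hx hy, P.leafDeg]
      exact fun h => P.notMem_range_leaf_of_cherry hxy hx hy ⟨_, h⟩
    · exact P.gdeg_induce_cherry hxy hx hy
  internalDeg u hu := by
    have hv : u.val ≠ v := fun h => hu ⟨.inr (), Subtype.ext h.symm⟩
    rw [P.gdeg_induce_of_ne hxy hx hy hv]
    refine P.internalDeg _ fun ⟨a, ha⟩ => hu ⟨.inl ⟨a, ?_, ?_⟩, Subtype.ext ha⟩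
    exacts [fun h => u.2.1 (h ▸ ha.symm), fun h => u.2.2 (h ▸ ha.symm)]
  leafSurj u hu := by
    by_cases hv : u.val = v
    · exact ⟨.inr (), Subtype.ext hv.symm⟩
    rw [P.gdeg_induce_of_ne hxy hx hy hv] at hu
    obtain ⟨a, ha⟩ := P.leafSurj _ hu
    refine ⟨.inl ⟨a, ?_, ?_⟩, Subtype.ext ha⟩
    exacts [fun h => u.2.1 (h ▸ ha.symm), fun h => u.2.2 (h ▸ ha.symm)]
  twoLeaves := hL

end Reduce

theorem attachCherry_reconstructible_iff {x y : X}
    (Q : PhyloNet W ({a : X // a ≠ x ∧ a ≠ y} ⊕ Unit)) (hxy : x ≠ y) :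
    (Q.attachCherry hxy).Reconstructible ↔ Q.Reconstructible := by
  refine ⟨fun h W' Q' hQ => ?_, fun hQ W' M hM => ?_⟩
  · exact (attachCherry_isom_iff hxy).mp (h _ _ ((attachCherry_sameDist_iff hxy).mpr hQ))
  · obtain ⟨w, hx, hy⟩ :=
      M.exists_adj_adj_of_dm_eq_two ((hM x y).symm.trans (Q.dm_attachCherry_left_right hxy))
    set M' := M.reduceCherry hxy hx hy Q.twoLeaves
    have hM' : M.Isom (M'.attachCherry hxy) :=
      M.isom_attachCherry hxy hx hy M' rfl (fun _ => rfl) rfl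
    have hQM' : Q.SameDist M' :=
      (attachCherry_sameDist_iff hxy).mp fun a b => (hM a b).trans (hM'.dm_eq a b)
    exact ((hQ _ M' hQM').attachCherry hxy).trans hM'.symm

end PhyloNet

/-- a network with a cherry is reconstructible from its shortest
distance matrix iff the network obtained by reducing the cherry is. -/
theorem cherry_reduction_reconstructible {V X : Type} (N : PhyloNet V X)
    (x y : X) (v : V) (hxy : x ≠ y)
    (hx : N.G.Adj (N.leaf x) v) (hy : N.G.Adj (N.leaf y) v)
    (N' : PhyloNet (↥{w : V | w ≠ N.leaf x ∧ w ≠ N.leaf y})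
      ({a : X // a ≠ x ∧ a ≠ y} ⊕ Unit))
    (hG : N'.G = N.G.induce {w : V | w ≠ N.leaf x ∧ w ≠ N.leaf y})
    (hleaf : ∀ a : {a : X // a ≠ x ∧ a ≠ y},
      (N'.leaf (Sum.inl a) : V) = N.leaf a.1)
    (hz : (N'.leaf (Sum.inr ()) : V) = v) :
    N.Reconstructible ↔ N'.Reconstructible := by
  rw [(N.isom_attachCherry hxy hx hy N' hG hleaf hz).reconstructible_iff]
  exact N'.attachCherry_reconstructible_iff hxy
end

section
/- Let N be a binary unrooted phylogenetic network on X and let e = uv be a cut-edge of N inducing the split A|B of X (A is the set of leaves in the component of N−e containing u, B the set in the component containing v). Then for all a,a' ∈ A and b,b' ∈ B: (i) d_m(a,b) + d_m(a',b') = d_m(a,b') + d_m(a',b), and (ii) d_m(a,a') + d_m(b,b') ≤ d_m(a,b) + d_m(a',b') − 2. -/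
open SimpleGraph

section Aux

variable {V : Type} {G : SimpleGraph V}

lemma split_le {x y w : V} (p : G.Walk x y) (hw : w ∈ p.support) :
    G.dist x w + G.dist w y ≤ p.length := by
  classical
  have h := congr_arg Walk.length (p.take_spec hw)
  rw [Walk.length_append] at h
  calc G.dist x w + G.dist w y
      ≤ (p.takeUntil w hw).length + (p.dropUntil w hw).length :=
        Nat.add_le_add (dist_le _) (dist_le _)
    _ = p.length := h

lemma edge_mem_of_not_reach {x y : V} {e : Sym2 V}
    (h : ¬ (G.deleteEdges {e}).Reachable x y) (p : G.Walk x y) : e ∈ p.edges := by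
  by_contra he
  exact h ⟨p.toDeleteEdges {e} (fun e' he' => by
    simp only [Set.mem_singleton_iff]
    rintro rfl; exact he he')⟩

lemma key_dist {u v x y : V} (hconn : G.Connected) (hadj : G.Adj u v)
    (hcut : ¬ (G.deleteEdges {s(u,v)}).Reachable u v)
    (hx : (G.deleteEdges {s(u,v)}).Reachable x u)
    (hy : (G.deleteEdges {s(u,v)}).Reachable y v) :
    G.dist x y = G.dist x u + 1 + G.dist v y := by
  have hduv : G.dist u v = 1 := dist_eq_one_iff_adj.mpr hadj
  have hxy : ¬ (G.deleteEdges {s(u,v)}).Reachable x y := fun h =>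
    hcut (hx.symm.trans (h.trans hy))
  have huy : ¬ (G.deleteEdges {s(u,v)}).Reachable u y := fun h => hcut (h.trans hy)
  have hge : G.dist x u + 1 + G.dist v y ≤ G.dist x y := by
    obtain ⟨p, hp⟩ := hconn.exists_walk_length_eq_dist x y
    have hu : u ∈ p.support :=
      p.fst_mem_support_of_mem_edges (edge_mem_of_not_reach hxy p)
    have h1 : G.dist x u + G.dist u y ≤ p.length := split_le p hu
    have h2 : 1 + G.dist v y ≤ G.dist u y := by
      obtain ⟨q, hq⟩ := hconn.exists_walk_length_eq_dist u y
      have hv : v ∈ q.support :=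
        q.snd_mem_support_of_mem_edges (edge_mem_of_not_reach huy q)
      have := split_le q hv
      rw [hq, hduv] at this
      exact this
    omega
  have hle : G.dist x y ≤ G.dist x u + 1 + G.dist v y := by
    calc G.dist x y ≤ G.dist x u + G.dist u y := hconn.dist_triangle
      _ ≤ G.dist x u + (G.dist u v + G.dist v y) :=
          Nat.add_le_add_left hconn.dist_triangle _
      _ = G.dist x u + 1 + G.dist v y := by rw [hduv]; omega
  omega

end Aux

/-- distance conditions satisfied by a cut-edge induced split. -/
theorem cut_edge_split_distance_conditions {V X : Type} (N : PhyloNet V X)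
    (u v : V) (hcut : N.IsCutEdge u v) (a a' b b' : X)
    (ha : N.leafSide u v a) (ha' : N.leafSide u v a')
    (hb : N.leafSide v u b) (hb' : N.leafSide v u b') :
    N.dm a b + N.dm a' b' = N.dm a b' + N.dm a' b ∧
    N.dm a a' + N.dm b b' + 2 ≤ N.dm a b + N.dm a' b' := by
  obtain ⟨hadj, hnr⟩ := hcut
  have hswap : (s(v,u) : Sym2 V) = s(u,v) := Sym2.eq_swap
  rw [PhyloNet.leafSide, hswap] at hb hb'
  have key : ∀ x y : X, N.leafSide u v x →
      (N.G.deleteEdges {s(u,v)}).Reachable (N.leaf y) v →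
      N.dm x y = N.G.dist (N.leaf x) u + 1 + N.G.dist v (N.leaf y) :=
    fun x y hx hy => key_dist N.conn hadj hnr hx hy
  have hab := key a b ha hb
  have hab' := key a b' ha hb'
  have ha'b := key a' b ha' hb
  have ha'b' := key a' b' ha' hb'
  have haa' : N.dm a a' ≤ N.G.dist (N.leaf a) u + N.G.dist u (N.leaf a') :=
    N.conn.dist_triangle
  have hbb' : N.dm b b' ≤ N.G.dist (N.leaf b) v + N.G.dist v (N.leaf b') :=
    N.conn.dist_triangle
  have e1 : N.G.dist u (N.leaf a') = N.G.dist (N.leaf a') u := SimpleGraph.dist_comm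
  have e2 : N.G.dist (N.leaf b) v = N.G.dist v (N.leaf b) := SimpleGraph.dist_comm
  omega
end

section
/- There exists a binary unrooted level-3 phylogenetic network N on four leaves {a,a',b,b'} such that, setting A = {a,a'} and B = {b,b'}, the conditions d_m(a,b) + d_m(a',b') = d_m(a,b') + d_m(a',b) and d_m(a,a') + d_m(b,b') ≤ d_m(a,b) + d_m(a',b') − 2 hold, but no cut-edge of N induces the split A|B. -/
open SimpleGraph

/-!
The network is a ladder whose two middle rungs are crossed, with `a, a'` hanging at one end and
`b, b'` at the other. Its eight internal vertices form its only blob, which has `10` edges, so the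
level is `10 - 8 + 1 = 3`. The crossing makes all four `a`–`b` distances equal to `5`, while
`d(a, a') = d(b, b') = 3`, so both distance conditions hold. But every internal edge lies on a
cycle, so the only cut-edges are the leaf edges, and these induce trivial splits.
The finite checks are done by letting the kernel compute closed balls (`ballFinset`).
-/

namespace SimpleGraph

variable {V : Type} [Fintype V] [DecidableEq V]

def ballFinset (H : SimpleGraph V) [DecidableRel H.Adj] (u : V) : ℕ → Finset V
  | 0 => {u}
  | n + 1 => (H.ballFinset u n).biUnion fun w => insert w (Finset.univ.filter (H.Adj w))

variable {H : SimpleGraph V} [DecidableRel H.Adj] {u v : V} {n : ℕ}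

theorem mem_ballFinset_iff : v ∈ H.ballFinset u n ↔ ∃ p : H.Walk u v, p.length ≤ n := by
  induction n generalizing v with
  | zero =>
    simp only [ballFinset, Finset.mem_singleton, Nat.le_zero]
    constructor
    · rintro rfl
      exact ⟨Walk.nil, rfl⟩
    · rintro ⟨p, hp⟩
      exact (Walk.eq_of_length_eq_zero hp).symm
  | succ n ih =>
    simp only [ballFinset, Finset.mem_biUnion, Finset.mem_insert, Finset.mem_filter,
      Finset.mem_univ, true_and]
    constructor
    · rintro ⟨w, hw, rfl | hwv⟩
      · obtain ⟨p, hp⟩ := ih.1 hw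
        exact ⟨p, by omega⟩
      · obtain ⟨p, hp⟩ := ih.1 hw
        exact ⟨p.concat hwv, by simp only [Walk.length_concat]; omega⟩
    · rintro ⟨p, hp⟩
      -- split off the last step of `p` by reversing it
      cases hq : p.reverse with
      | nil => exact ⟨_, ih.2 ⟨Walk.nil, Nat.zero_le n⟩, Or.inl rfl⟩
      | cons hvw q =>
        have hlen : q.reverse.length ≤ n := by
          have := congrArg Walk.length hq
          simp only [Walk.length_reverse, Walk.length_cons] at this
          simp only [Walk.length_reverse]
          omega
        exact ⟨_, ih.2 ⟨q.reverse, hlen⟩, Or.inr hvw.symm⟩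

theorem reachable_of_mem_ballFinset (h : v ∈ H.ballFinset u n) : H.Reachable u v :=
  let ⟨p, _⟩ := mem_ballFinset_iff.1 h
  ⟨p⟩

theorem dist_le_of_mem_ballFinset (h : v ∈ H.ballFinset u n) : H.dist u v ≤ n :=
  let ⟨p, hp⟩ := mem_ballFinset_iff.1 h
  (dist_le p).trans hp

theorem dist_eq_of_mem_ballFinset_succ (h : v ∈ H.ballFinset u (n + 1))
    (h' : v ∉ H.ballFinset u n) : H.dist u v = n + 1 := by
  refine le_antisymm (dist_le_of_mem_ballFinset h) (Nat.lt_of_not_le fun hle => h' ?_)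
  obtain ⟨p, hp⟩ := (reachable_of_mem_ballFinset h).exists_walk_length_eq_dist
  exact mem_ballFinset_iff.2 ⟨p, hp ▸ hle⟩

theorem connected_of_forall_mem_ballFinset (u : V) (n : ℕ) (h : ∀ v, v ∈ H.ballFinset u n) :
    H.Connected :=
  (connected_iff_exists_forall_reachable H).2 ⟨u, fun v => reachable_of_mem_ballFinset (h v)⟩

end SimpleGraph

theorem gdeg_eq_degree {V : Type} (G : SimpleGraph V) (v : V) [Fintype (G.neighborSet v)] :
    gdeg G v = G.degree v := by
  rw [gdeg, ← neighborSet, Set.ncard_eq_toFinset_card', ← neighborFinset_def,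
    card_neighborFinset_eq_degree]

theorem edgesIn_eq_card_filter {V : Type} [Fintype V] [DecidableEq V] (G : SimpleGraph V)
    [Fintype G.edgeSet] (B : Set V) [DecidablePred (· ∈ B)] :
    edgesIn G B = (G.edgeFinset.filter fun e => ∀ v ∈ e, v ∈ B).card := by
  rw [edgesIn, ← Set.ncard_coe_finset]
  congr 1
  ext e
  simp [mem_edgeFinset]

theorem SimpleGraph.Reachable.reachable_deleteEdges_or {V : Type} {G : SimpleGraph V} {u v w : V}
    (h : G.Reachable w u) :
    (G.deleteEdges {s(u, v)}).Reachable w u ∨ (G.deleteEdges {s(u, v)}).Reachable w v := by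
  obtain ⟨p⟩ := h
  suffices ∀ {a b} (q : G.Walk a b), b = u →
      (G.deleteEdges {s(u, v)}).Reachable a u ∨ (G.deleteEdges {s(u, v)}).Reachable a v from
    this p rfl
  intro a b q
  induction q with
  | nil => rintro rfl; exact Or.inl Reachable.rfl
  | @cons w w' _ hadj _ ih =>
    intro hb
    by_cases he : s(w, w') = s(u, v)
    · rcases Sym2.eq_iff.1 he with ⟨rfl, -⟩ | ⟨rfl, -⟩
      · exact Or.inl Reachable.rfl
      · exact Or.inr Reachable.rfl
    · have hadj' : (G.deleteEdges {s(u, v)}).Adj w w' := by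
        simpa only [deleteEdges_adj, Set.mem_singleton_iff] using ⟨hadj, he⟩
      exact (ih hb).imp hadj'.reachable.trans hadj'.reachable.trans

theorem SimpleGraph.Reachable.eq_of_forall_not_adj {V : Type} {G : SimpleGraph V} {a b : V}
    (h : G.Reachable a b) (ha : ∀ z, ¬ G.Adj a z) : a = b := by
  obtain ⟨p⟩ := h
  cases p with
  | nil => rfl
  | cons hadj _ => exact absurd hadj (ha _)

theorem TwoConn.not_mem_of_forall_adj_eq {V : Type} {G : SimpleGraph V} {B : Set V}
    (hB : TwoConn G B) {v w : V} (hv : ∀ z, G.Adj v z → z = w) : v ∉ B := by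
  obtain ⟨hcard, hconn, hdel⟩ := hB
  intro hvB
  -- `v` would be isolated in a connected induced subgraph with another vertex
  have isolated {B' : Set V} (hvB' : v ∈ B') (hw : w ∈ B' → w = v) (hB' : 1 < B'.ncard)
      (hc : (G.induce B').Connected) : False := by
    obtain ⟨z, hz, hzv⟩ := Set.exists_ne_of_one_lt_ncard hB' v
    refine hzv (congrArg Subtype.val
      ((hc.preconnected ⟨v, hvB'⟩ ⟨z, hz⟩).eq_of_forall_not_adj fun z' hadj => ?_)).symm
    have hzw : z'.1 = w := hv _ hadj
    exact (show G.Adj v z'.1 from hadj).ne (hzw.trans (hw (hzw ▸ z'.2))).symm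
  by_cases hwB : w ∈ B ∧ w ≠ v
  · refine isolated (B' := B \ {w}) ⟨hvB, hwB.2.symm⟩ (fun h => absurd rfl h.2) ?_ (hdel w hwB.1)
    rw [Set.ncard_sdiff_singleton_of_mem hwB.1]
    omega
  · exact isolated hvB (fun hw => not_and_not_right.1 hwB hw) (by omega) hconn

namespace PhyloNet

variable {V X : Type} {N : PhyloNet V X} {u v : V} {x y : X}

theorem exists_neighborSet_leaf_eq (N : PhyloNet V X) (x : X) :
    ∃ v, N.G.neighborSet (N.leaf x) = {v} :=
  Set.ncard_eq_one.1 (N.leafDeg x)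

theorem subset_compl_range_leaf_of_twoConn {B : Set V} (hB : TwoConn N.G B) :
    B ⊆ (Set.range N.leaf)ᶜ := by
  rintro _ hxB ⟨x, rfl⟩
  obtain ⟨w, hw⟩ := N.exists_neighborSet_leaf_eq x
  refine hB.not_mem_of_forall_adj_eq (w := w) (fun z hz => ?_) hxB
  simpa [hw] using (mem_neighborSet _ _ _).2 hz

/-- Deleting its edge isolates a leaf. -/
theorem eq_of_leafSide_leaf (hadj : N.G.Adj (N.leaf x) v) (h : N.leafSide (N.leaf x) v y) :
    y = x := by
  obtain ⟨w, hw⟩ := N.exists_neighborSet_leaf_eq x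
  have hnbr {z} (hz : N.G.Adj (N.leaf x) z) : z = w := by
    simpa [hw] using (mem_neighborSet _ _ _).2 hz
  refine N.leafInj (h.symm.eq_of_forall_not_adj fun z hz => ?_).symm
  rw [deleteEdges_adj, Set.mem_singleton_iff, hnbr hz.1, ← hnbr hadj] at hz
  exact hz.2 rfl

theorem leafSide_or_leafSide_swap (N : PhyloNet V X) (u v : V) (y : X) :
    N.leafSide u v y ∨ N.leafSide v u y := by
  rw [leafSide, leafSide, Sym2.eq_swap (a := v)]
  exact (N.conn.preconnected _ u).reachable_deleteEdges_or

theorem not_mem_range_leaf_of_split (hadj : N.G.Adj u v) {a a' b b' : X} (ha : a ≠ a')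
    (hb : b ≠ b') (hua : N.leafSide u v a) (hua' : N.leafSide u v a')
    (hub : ¬ N.leafSide u v b) (hub' : ¬ N.leafSide u v b') :
    u ∉ Set.range N.leaf ∧ v ∉ Set.range N.leaf := by
  constructor
  · rintro ⟨x, rfl⟩
    exact ha ((eq_of_leafSide_leaf hadj hua).trans (eq_of_leafSide_leaf hadj hua').symm)
  · rintro ⟨x, rfl⟩
    have hvb := (N.leafSide_or_leafSide_swap u _ b).resolve_left hub
    have hvb' := (N.leafSide_or_leafSide_swap u _ b').resolve_left hub'
    exact hb ((eq_of_leafSide_leaf hadj.symm hvb).trans (eq_of_leafSide_leaf hadj.symm hvb').symm)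

end PhyloNet

/-- The ladder with top row `0-1-2-3`, bottom row `7-6-5-4`, end rungs `0-7`, `3-4` and crossed
middle rungs `1-5`, `2-6`; the leaves `8, 9, 10, 11` (that is `a, a', b, b'`) hang at
`0, 7, 3, 4`. -/
def ladderEdges : Finset (Sym2 (Fin 12)) :=
  {s(0, 1), s(1, 2), s(2, 3), s(3, 4), s(4, 5), s(5, 6), s(6, 7), s(7, 0), s(1, 5), s(2, 6),
    s(0, 8), s(7, 9), s(3, 10), s(4, 11)}

def ladder : SimpleGraph (Fin 12) := fromEdgeSet ladderEdges

instance : DecidableRel ladder.Adj := inferInstanceAs (DecidableRel (fromEdgeSet _).Adj)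

def ladderLeaf : Fin 4 → Fin 12 := ![8, 9, 10, 11]

def ladderCore : Set (Fin 12) := {v | v < 8}

instance : DecidablePred (· ∈ ladderCore) := fun v => inferInstanceAs (Decidable (v < 8))

theorem compl_range_ladderLeaf : (Set.range ladderLeaf)ᶜ = ladderCore := by
  ext v
  simp only [Set.mem_compl_iff, Set.mem_range, not_exists]
  revert v
  decide

def ladderNet : PhyloNet (Fin 12) (Fin 4) where
  G := ladder
  conn := connected_of_forall_mem_ballFinset 0 7 (by decide +kernel)
  leaf := ladderLeaf
  leafInj := by decide
  leafDeg x := by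
    rw [gdeg_eq_degree]
    revert x
    decide
  internalDeg v hv := by
    rw [gdeg_eq_degree]
    rw [← Set.mem_compl_iff, compl_range_ladderLeaf] at hv
    revert v
    decide
  leafSurj v hv := by
    rw [gdeg_eq_degree] at hv
    simp only [Set.mem_range]
    revert v
    decide
  twoLeaves := inferInstance

instance : DecidableRel ladderNet.G.Adj := inferInstanceAs (DecidableRel ladder.Adj)

theorem ncard_ladderCore : ladderCore.ncard = 8 := by
  rw [Set.ncard_eq_toFinset_card']
  decide

theorem ladderCore_twoConn : TwoConn ladder ladderCore := by
  refine ⟨by rw [ncard_ladderCore]; omega,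
    connected_of_forall_mem_ballFinset ⟨0, by decide⟩ 7 (by decide +kernel), fun v hv => ?_⟩
  have base : (if v = 0 then 1 else 0) ∈ ladderCore \ {v} := by
    revert v
    decide
  exact connected_of_forall_mem_ballFinset ⟨_, base⟩ 7 (by revert v; decide +kernel)

theorem ladderNet_levelLE : LevelLE ladderNet.G 3 := by
  intro B hB
  have hsub : B ⊆ ladderCore :=
    compl_range_ladderLeaf ▸ PhyloNet.subset_compl_range_leaf_of_twoConn hB.1
  rw [← hB.2 _ ladderCore_twoConn hsub, ncard_ladderCore]
  exact (edgesIn_eq_card_filter ladder ladderCore).trans_le (by decide +kernel)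

theorem ladderNet_dm :
    ladderNet.dm 0 1 = 3 ∧ ladderNet.dm 2 3 = 3 ∧ ladderNet.dm 0 2 = 5 ∧
      ladderNet.dm 0 3 = 5 ∧ ladderNet.dm 1 2 = 5 ∧ ladderNet.dm 1 3 = 5 := by
  refine ⟨?_, ?_, ?_, ?_, ?_, ?_⟩ <;>
    exact dist_eq_of_mem_ballFinset_succ (by decide +kernel) (by decide +kernel)

theorem ladder_reachable_deleteEdges {u v : Fin 12} (hu : u ∈ ladderCore) (hv : v ∈ ladderCore)
    (hadj : ladder.Adj u v) : (ladder.deleteEdges {s(u, v)}).Reachable u v := by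
  apply reachable_of_mem_ballFinset (n := 7)
  revert u v
  decide +kernel

theorem ladderNet_not_split : ¬ ∃ u v : Fin 12, ladderNet.IsCutEdge u v ∧
    ∀ x : Fin 4, ladderNet.leafSide u v x ↔ (x = 0 ∨ x = 1) := by
  rintro ⟨u, v, ⟨hadj, hcut⟩, hside⟩
  obtain ⟨hu, hv⟩ := PhyloNet.not_mem_range_leaf_of_split (b := 2) (b' := 3) hadj
    (by decide) (by decide) ((hside 0).2 (by simp)) ((hside 1).2 (by simp))
    (by simp [hside]) (by simp [hside])
  exact hcut (ladder_reachable_deleteEdges (compl_range_ladderLeaf ▸ hu)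
    (compl_range_ladderLeaf ▸ hv) hadj)

/-- there is a level-3 network on four leaves `{a, a', b, b'}`
(`0, 1, 2, 3`) in which the two distance conditions hold for
`A = {a, a'}`, `B = {b, b'}`, yet no cut-edge induces the split `A|B`. -/
theorem level3_counterexample_to_split_conditions :
    ∃ (V : Type) (N : PhyloNet V (Fin 4)),
      LevelLE N.G 3 ∧
      N.dm 0 2 + N.dm 1 3 = N.dm 0 3 + N.dm 1 2 ∧
      N.dm 0 1 + N.dm 2 3 + 2 ≤ N.dm 0 2 + N.dm 1 3 ∧
      ¬ ∃ u v : V, N.IsCutEdge u v ∧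
          ∀ x : Fin 4, N.leafSide u v x ↔ (x = 0 ∨ x = 1) := by
  obtain ⟨h01, h23, h02, h03, h12, h13⟩ := ladderNet_dm
  exact ⟨Fin 12, ladderNet, ladderNet_levelLE, by omega, by omega, ladderNet_not_split⟩
end

section
/- Two similar alt-path structures obtained from the same binary tree T realize the same shortest distance matrix: for every pair of leaves x,y, the shortest-path distance between x and y in the first alt-path structure equals the shortest-path distance between the corresponding leaves in the second. -/
open SimpleGraph

/-- `u` is a leaf of the tree `T`. -/
def TreeLeaf {U : Type} (T : SimpleGraph U) (u : U) : Prop := gdeg T u = 1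

/-- The vertices of the alt-path structure of a tree `T` with proper
2-colouring `c` (black = `true`) and pendant-blob leaf counts `k`.
* Each red internal vertex is kept (`plain`).
* Each black internal vertex is replaced by a level-2 blob with attachment
  points `gv _ _ _ i` and poles `pole _ _ _ b`.
* Each black leaf `u` is replaced by a pendant level-2 blob of the form
  `(k u, 0, 0, 0)`: poles `lpole _ _ _ b`, attachment vertex `att`,
  spine vertices `spine` and pendant leaves `leafv`.
* Each red leaf `u` is replaced by a pendant level-1 blob: the cycle on
  `att` and the `spine` vertices, with pendant leaves `leafv`. -/
inductive APV (U : Type) (T : SimpleGraph U) (c : U → Bool) (k : U → ℕ) : Type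
  | plain (u : U) (h : ¬ TreeLeaf T u) (hc : c u = false) : APV U T c k
  | gv (u : U) (h : ¬ TreeLeaf T u) (hc : c u = true) (i : Fin 3) : APV U T c k
  | pole (u : U) (h : ¬ TreeLeaf T u) (hc : c u = true) (b : Bool) : APV U T c k
  | lpole (u : U) (h : TreeLeaf T u) (hc : c u = true) (b : Bool) : APV U T c k
  | att (u : U) (h : TreeLeaf T u) : APV U T c k
  | spine (u : U) (h : TreeLeaf T u) (i : Fin (k u)) : APV U T c k
  | leafv (u : U) (h : TreeLeaf T u) (i : Fin (k u)) : APV U T c k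

/-- The attachment point (port) of the gadget replacing `u`, towards the
neighbouring tree vertex `w`; `nu` chooses which of the three attachment
points of a black internal gadget is used for each neighbour. -/
noncomputable def APport {U : Type} (T : SimpleGraph U) (c : U → Bool)
    (k : U → ℕ) (nu : U → U → Fin 3) (u w : U) : APV U T c k := by
  classical
  exact if h : TreeLeaf T u then APV.att u h
    else if hc : c u = true then APV.gv u h hc (nu u w)
    else APV.plain u h (by simpa using hc)

/-- The edges of the alt-path structure (one direction of each edge). -/
inductive APRel {U : Type} (T : SimpleGraph U) (c : U → Bool) (k : U → ℕ)
    (nu : U → U → Fin 3) : APV U T c k → APV U T c k → Prop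
  | poleGv (u : U) (h : ¬ TreeLeaf T u) (hc : c u = true) (b : Bool) (i : Fin 3) :
      APRel T c k nu (.pole u h hc b) (.gv u h hc i)
  | lpoles (u : U) (h : TreeLeaf T u) (hc : c u = true) :
      APRel T c k nu (.lpole u h hc true) (.lpole u h hc false)
  | lpoleAtt (u : U) (h : TreeLeaf T u) (hc : c u = true) (b : Bool) :
      APRel T c k nu (.lpole u h hc b) (.att u h)
  | lpoleSpineFirst (u : U) (h : TreeLeaf T u) (hc : c u = true) (h0 : 0 < k u) :
      APRel T c k nu (.lpole u h hc true) (.spine u h ⟨0, h0⟩)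
  | lpoleSpineLast (u : U) (h : TreeLeaf T u) (hc : c u = true) (h0 : 0 < k u) :
      APRel T c k nu (.lpole u h hc false) (.spine u h ⟨k u - 1, by omega⟩)
  | spineChain (u : U) (h : TreeLeaf T u) (i : ℕ) (hi : i + 1 < k u) :
      APRel T c k nu (.spine u h ⟨i, by omega⟩) (.spine u h ⟨i + 1, hi⟩)
  | leafSpine (u : U) (h : TreeLeaf T u) (i : Fin (k u)) :
      APRel T c k nu (.leafv u h i) (.spine u h i)
  | attSpineFirst (u : U) (h : TreeLeaf T u) (hc : c u = false) (h0 : 0 < k u) :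
      APRel T c k nu (.att u h) (.spine u h ⟨0, h0⟩)
  | attSpineLast (u : U) (h : TreeLeaf T u) (hc : c u = false) (h0 : 0 < k u) :
      APRel T c k nu (.att u h) (.spine u h ⟨k u - 1, by omega⟩)
  | cross (u w : U) (hadj : T.Adj u w) :
      APRel T c k nu (APport T c k nu u w) (APport T c k nu w u)

/-- The alt-path structure of the tree `T` for the colouring `c`. -/
noncomputable def APGraph {U : Type} (T : SimpleGraph U) (c : U → Bool)
    (k : U → ℕ) (nu : U → U → Fin 3) : SimpleGraph (APV U T c k) :=
  SimpleGraph.fromRel (APRel T c k nu)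

/-!
Fix a leaf `w` of `T` and the `j`-th pendant leaf of its blob. Between the gadgets of two tree
vertices at tree distance `d`, a shortest route crosses the `d` tree edges and pays extra steps
inside black gadgets: two in a black internal gadget (port, pole, port) and one in a black leaf
gadget, whose spine lies one step beyond its attachment vertex. Since colours alternate along the
tree path, these extras add up to exactly `d`, whichever colour class is black. Accordingly
`leafPotential` assigns every vertex its claimed distance to the target; it vanishes there,
changes by at most one along every edge and decreases along some edge at every other vertex, so it
is the graph distance. Its value at a pendant leaf involves neither the colouring nor the choice of
ports.
-/

namespace SimpleGraph

variable {V : Type*} {G : SimpleGraph V}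

theorem Walk.le_add_length_of_le_add_one {φ : V → ℕ}
    (hφ : ∀ a b, G.Adj a b → φ a ≤ φ b + 1) {x y : V} (p : G.Walk x y) :
    φ x ≤ φ y + p.length := by
  induction p with
  | nil => simp
  | cons hab _ ih =>
    have := hφ _ _ hab
    rw [Walk.length_cons]
    omega

theorem exists_walk_length_le_of_descent {φ : V → ℕ} {t : V}
    (hdesc : ∀ v ≠ t, ∃ v', G.Adj v v' ∧ φ v' < φ v) (v : V) :
    ∃ p : G.Walk v t, p.length ≤ φ v := by
  induction hv : φ v using Nat.strong_induction_on generalizing v with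
  | _ n ih =>
    by_cases hvt : v = t
    · subst hvt
      exact ⟨.nil, Nat.zero_le _⟩
    obtain ⟨v', hadj, hlt⟩ := hdesc v hvt
    obtain ⟨p, hp⟩ := ih (φ v') (hv ▸ hlt) v' rfl
    exact ⟨.cons hadj p, by rw [Walk.length_cons]; omega⟩

theorem dist_eq_of_le_add_one_of_descent {φ : V → ℕ} {t : V}
    (hφ : ∀ a b, G.Adj a b → φ a ≤ φ b + 1)
    (hdesc : ∀ v ≠ t, ∃ v', G.Adj v v' ∧ φ v' < φ v) (ht : φ t = 0) (v : V) :
    G.dist v t = φ v := by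
  obtain ⟨p, hp⟩ := exists_walk_length_le_of_descent hdesc v
  obtain ⟨q, hq⟩ := p.reachable.exists_walk_length_eq_dist
  have := q.le_add_length_of_le_add_one hφ
  have := dist_le p
  omega

theorem Connected.exists_adj_dist_add_one (hG : G.Connected) {v w : V} (hvw : v ≠ w) :
    ∃ u, G.Adj v u ∧ G.dist v w = G.dist u w + 1 := by
  obtain ⟨p, hp⟩ := hG.exists_walk_length_eq_dist v w
  cases p with
  | nil => exact absurd rfl hvw
  | cons hadj q =>
    have htri := hadj.reachable.dist_triangle_left w
    have hq := dist_le q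
    rw [dist_eq_one_iff_adj.2 hadj] at htri
    rw [Walk.length_cons] at hp
    exact ⟨_, hadj, by omega⟩

theorem Connected.dist_eq_add_one_or_of_adj (hG : G.Connected) (f : G.Coloring Bool)
    {a b : V} (hab : G.Adj a b) (w : V) :
    G.dist a w = G.dist b w + 1 ∨ G.dist b w = G.dist a w + 1 := by
  have hne : G.dist a w ≠ G.dist b w := by
    intro heq
    obtain ⟨p, hp⟩ := hG.exists_walk_length_eq_dist a w
    obtain ⟨q, hq⟩ := hG.exists_walk_length_eq_dist b w
    have hp' := f.even_length_iff_congr p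
    have hq' := f.even_length_iff_congr q
    rw [hp, heq, ← hq, hq'] at hp'
    exact f.valid hab (by cases ha : f a <;> cases hb : f b <;> simp_all)
  rw [dist_comm (u := a), dist_comm (u := b)] at hne ⊢
  rcases hab.diff_dist_adj (u := w) with h | h | h <;> omega

end SimpleGraph

theorem Bool.toNat_add_toNat_of_ne {a b : Bool} (h : a ≠ b) : a.toNat + b.toNat = 1 := by
  cases a <;> cases b <;> simp_all

theorem TreeLeaf.eq_of_adj {U : Type} {T : SimpleGraph U} {y a b : U} (hy : TreeLeaf T y)
    (ha : T.Adj y a) (hb : T.Adj y b) : a = b := by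
  obtain ⟨x, hx⟩ := Set.ncard_eq_one.mp hy
  have ha' : a ∈ {u | T.Adj y u} := ha
  have hb' : b ∈ {u | T.Adj y u} := hb
  rw [hx] at ha' hb'
  exact ha'.trans hb'.symm

theorem TreeLeaf.dist_eq_add_one {U : Type} {T : SimpleGraph U} (hT : T.Connected)
    {y z w : U} (hy : TreeLeaf T y) (hyz : T.Adj y z) (hyw : y ≠ w) :
    T.dist y w = T.dist z w + 1 := by
  obtain ⟨x, hyx, hx⟩ := hT.exists_adj_dist_add_one hyw
  rw [hy.eq_of_adj hyz hyx, hx]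

def APV.base {U : Type} {T : SimpleGraph U} {c : U → Bool} {k : U → ℕ} : APV U T c k → U
  | .plain z _ _ | .gv z _ _ _ | .pole z _ _ _ | .lpole z _ _ _ | .att z _ | .spine z _ _
  | .leafv z _ _ => z

section

variable {U : Type}

def spineDepth (k : U → ℕ) (z : U) (i : ℕ) : ℕ := min i (k z - 1 - i)

def PointsToward (T : SimpleGraph U) (nu : U → U → Fin 3) (w z : U) (i : Fin 3) : Prop :=
  ∃ y, T.Adj z y ∧ T.dist y w < T.dist z w ∧ nu z y = i

open Classical in
/-- The distance to `.leafv w _ j`. A pole of a black `w` reaches the spine either directly or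
through the other pole, hence the minima. -/
noncomputable def leafPotential (T : SimpleGraph U) (c : U → Bool) (k : U → ℕ)
    (nu : U → U → Fin 3) (w : U) (j : ℕ) : APV U T c k → ℕ
  | .plain z _ _ => 2 * T.dist z w + spineDepth k w j + 2
  | .gv z _ _ i => if PointsToward T nu w z i then 2 * T.dist z w + spineDepth k w j + 1
      else 2 * T.dist z w + spineDepth k w j + 3
  | .pole z _ _ _ => 2 * T.dist z w + spineDepth k w j + 2
  | .lpole z _ _ b => if z = w then (if b then min (j + 2) (k w + 2 - j)
        else min (k w + 1 - j) (j + 3))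
      else 2 * T.dist z w + spineDepth k w j + 2
  | .att z _ => if z = w then spineDepth k w j + 2 + (c w).toNat
      else 2 * T.dist z w + spineDepth k w j + 2 - (c z).toNat
  | .spine z _ i => if z = w then Nat.dist i j + 1
      else 2 * T.dist z w + spineDepth k w j + spineDepth k z i + 3
  | .leafv z _ i => if z = w then (if (i : ℕ) = j then 0 else Nat.dist i j + 2)
      else 2 * T.dist z w + spineDepth k w j + spineDepth k z i + 4

end

section AltPath

variable {U : Type} {T : SimpleGraph U} {c : U → Bool} {k : U → ℕ} {nu : U → U → Fin 3}
  {w : U}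

theorem APport_of_leaf {u : U} (h : TreeLeaf T u) (x : U) :
    APport T c k nu u x = .att u h := by
  simp [APport, h]

theorem APport_of_black {u : U} (h : ¬ TreeLeaf T u) (hu : c u = true) (x : U) :
    APport T c k nu u x = .gv u h hu (nu u x) := by
  simp [APport, h, hu]

theorem APport_of_red {u : U} (h : ¬ TreeLeaf T u) (hu : c u = false) (x : U) :
    APport T c k nu u x = .plain u h hu := by
  simp [APport, h, hu]

namespace APGraph

theorem adj_of_rel {a b : APV U T c k} (hab : a ≠ b) (h : APRel T c k nu a b) :
    (APGraph T c k nu).Adj a b :=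
  (fromRel_adj _ _ _).2 ⟨hab, .inl h⟩

theorem adj_APport {a b : U} (hab : T.Adj a b) :
    (APGraph T c k nu).Adj (APport T c k nu a b) (APport T c k nu b a) := by
  refine adj_of_rel ?_ (.cross a b hab)
  unfold APport
  split_ifs <;> simp [hab.ne]

theorem adj_spine_succ {u : U} (h : TreeLeaf T u) {i : ℕ} (hi : i + 1 < k u) :
    (APGraph T c k nu).Adj (.spine u h ⟨i, by omega⟩) (.spine u h ⟨i + 1, hi⟩) :=
  adj_of_rel (by simp) (.spineChain u h i hi)

theorem exists_adj_spine {u : U} (h : TreeLeaf T u) (i : Fin (k u)) {m : ℕ} (hm : m < k u)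
    (him : (i : ℕ) ≠ m) :
    ∃ i' : Fin (k u), (APGraph T c k nu).Adj (.spine u h i) (.spine u h i') ∧
      Nat.dist i' m + 1 = Nat.dist i m := by
  obtain ⟨i, hi⟩ := i
  dsimp only at him ⊢
  rcases Nat.lt_or_gt_of_ne him with him | him
  · exact ⟨⟨i + 1, by omega⟩, adj_spine_succ h _, by simp only [Nat.dist]; omega⟩
  · obtain ⟨p, rfl⟩ : ∃ p, i = p + 1 := ⟨i - 1, by omega⟩
    exact ⟨⟨p, by omega⟩, (adj_spine_succ h hi).symm, by simp only [Nat.dist]; omega⟩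

end APGraph

theorem leafPotential_APport_of_farther (hT : T.Connected)
    (hnu : ∀ u, Set.InjOn (nu u) {x | T.Adj u x}) (hw : TreeLeaf T w) (j : ℕ) {a b : U}
    (hab : T.Adj a b) (hd : T.dist b w = T.dist a w + 1) :
    leafPotential T c k nu w j (APport T c k nu a b) =
      2 * T.dist a w + spineDepth k w j + 2 + (c a).toNat := by
  by_cases haw : a = w
  · subst haw
    simp [APport_of_leaf hw, leafPotential]
  have ha : ¬ TreeLeaf T a := fun ha => by
    have := ha.dist_eq_add_one hT hab haw
    omega
  cases hca : c a
  · simp [APport_of_red ha hca, leafPotential]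
  · have : ¬ PointsToward T nu w a (nu a b) := by
      rintro ⟨y, hay, hy, hyb⟩
      obtain rfl := hnu a hay hab hyb
      omega
    simp [APport_of_black ha hca, leafPotential, this]

theorem leafPotential_APport_of_closer (j : ℕ) {a b : U} (hab : T.Adj a b)
    (hd : T.dist a w = T.dist b w + 1) :
    leafPotential T c k nu w j (APport T c k nu a b) + (c a).toNat =
      2 * T.dist a w + spineDepth k w j + 2 := by
  have haw : a ≠ w := by
    rintro rfl
    simp at hd
  by_cases ha : TreeLeaf T a
  · have : (c a).toNat ≤ 1 := Bool.toNat_le (c a)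
    simp only [leafPotential, APport_of_leaf ha, haw, ↓reduceIte]
    omega
  cases hca : c a
  · simp [APport_of_red ha hca, leafPotential]
  · have : PointsToward T nu w a (nu a b) := ⟨b, hab, by omega, rfl⟩
    simp [APport_of_black ha hca, leafPotential, this]

theorem leafPotential_APport_le (hT : T.Connected) (hc : ∀ u w, T.Adj u w → c u ≠ c w)
    (hnu : ∀ u, Set.InjOn (nu u) {x | T.Adj u x}) (hw : TreeLeaf T w) (j : ℕ) {a b : U}
    (hab : T.Adj a b) :
    leafPotential T c k nu w j (APport T c k nu a b) ≤
      leafPotential T c k nu w j (APport T c k nu b a) + 1 := by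
  have hcab := Bool.toNat_add_toNat_of_ne (hc a b hab)
  rcases hT.dist_eq_add_one_or_of_adj (Coloring.mk c fun h => hc _ _ h) hab w with hd | hd
  · have := leafPotential_APport_of_closer (c := c) (k := k) (nu := nu) j hab hd
    have := leafPotential_APport_of_farther (c := c) (k := k) hT hnu hw j hab.symm hd
    omega
  · have := leafPotential_APport_of_farther (c := c) (k := k) hT hnu hw j hab hd
    have := leafPotential_APport_of_closer (c := c) (k := k) (nu := nu) j hab.symm hd
    omega

-- For `k w ≥ 4` the pendant cycle of a red `w` would shortcut its first and last spine vertices.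
theorem leafPotential_le_of_APRel (hT : T.Connected) (hc : ∀ u w, T.Adj u w → c u ≠ c w)
    (hnu : ∀ u, Set.InjOn (nu u) {x | T.Adj u x}) (hw : TreeLeaf T w) (hkw : k w ≤ 3)
    {j : ℕ} (hj : j < k w) {a b : APV U T c k} (h : APRel T c k nu a b) :
    leafPotential T c k nu w j a ≤ leafPotential T c k nu w j b + 1 ∧
      leafPotential T c k nu w j b ≤ leafPotential T c k nu w j a + 1 := by
  cases h with
  | poleGv z hz _ _ i =>
    by_cases hi : PointsToward T nu w z i <;> simp only [leafPotential, hi, ↓reduceIte] <;> omega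
  | cross a b hab =>
    exact ⟨leafPotential_APport_le hT hc hnu hw j hab,
      leafPotential_APport_le hT hc hnu hw j hab.symm⟩
  | lpoles z =>
    rcases eq_or_ne z w with rfl | hzw
    · simp only [leafPotential, ↓reduceIte, Bool.false_eq_true]
      omega
    · simp only [leafPotential, hzw, ↓reduceIte]
      omega
  | lpoleAtt z _ hcz b =>
    rcases eq_or_ne z w with rfl | hzw
    · cases b <;> simp only [leafPotential, spineDepth, hcz, ↓reduceIte, Bool.false_eq_true,
        Bool.toNat_true] <;> omega
    · simp only [leafPotential, hzw, hcz, ↓reduceIte, Bool.toNat_true]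
      omega
  | lpoleSpineFirst z | lpoleSpineLast z | spineChain z =>
    rcases eq_or_ne z w with rfl | hzw
    · simp only [leafPotential, Nat.dist, ↓reduceIte, Bool.false_eq_true]
      omega
    · simp only [leafPotential, spineDepth, hzw, ↓reduceIte]
      omega
  | leafSpine z _ i =>
    rcases eq_or_ne z w with rfl | hzw
    · simp only [leafPotential, Nat.dist, ↓reduceIte]
      split_ifs <;> omega
    · simp only [leafPotential, hzw, ↓reduceIte]
      omega
  | attSpineFirst z _ hcz | attSpineLast z _ hcz =>
    rcases eq_or_ne z w with rfl | hzw
    · simp only [leafPotential, spineDepth, Nat.dist, hcz, ↓reduceIte, Bool.toNat_false]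
      omega
    · simp only [leafPotential, spineDepth, hzw, hcz, ↓reduceIte, Bool.toNat_false]
      omega

open APGraph

theorem exists_adj_leafPotential_lt_lpole_self (hw : TreeLeaf T w) (hcw : c w = true) {j : ℕ}
    (hj : j < k w) (b : Bool) :
    ∃ v', (APGraph T c k nu).Adj (.lpole w hw hcw b) v' ∧
      leafPotential T c k nu w j v' < leafPotential T c k nu w j (.lpole w hw hcw b) := by
  have h0 : 0 < k w := by omega
  cases b
  · by_cases hjk : k w + 1 - j ≤ j + 3
    · refine ⟨.spine w hw ⟨k w - 1, by omega⟩,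
        adj_of_rel (by simp) (.lpoleSpineLast w hw hcw h0), ?_⟩
      simp only [leafPotential, Nat.dist, ↓reduceIte, Bool.false_eq_true]
      omega
    · refine ⟨.lpole w hw hcw true, (adj_of_rel (by simp) (.lpoles w hw hcw)).symm, ?_⟩
      simp only [leafPotential, ↓reduceIte, Bool.false_eq_true]
      omega
  · by_cases hjk : 2 * j ≤ k w
    · refine ⟨.spine w hw ⟨0, h0⟩, adj_of_rel (by simp) (.lpoleSpineFirst w hw hcw h0), ?_⟩
      simp only [leafPotential, Nat.dist, ↓reduceIte]
      omega
    · refine ⟨.lpole w hw hcw false, adj_of_rel (by simp) (.lpoles w hw hcw), ?_⟩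
      simp only [leafPotential, ↓reduceIte, Bool.false_eq_true]
      omega

theorem exists_adj_leafPotential_lt_att_self (hw : TreeLeaf T w) {j : ℕ} (hj : j < k w) :
    ∃ v', (APGraph T c k nu).Adj (.att w hw) v' ∧
      leafPotential T c k nu w j v' < leafPotential T c k nu w j (.att w hw) := by
  have h0 : 0 < k w := by omega
  cases hcw : c w
  · by_cases hjk : j ≤ k w - 1 - j
    · refine ⟨.spine w hw ⟨0, h0⟩, adj_of_rel (by simp) (.attSpineFirst w hw hcw h0), ?_⟩
      simp only [leafPotential, spineDepth, Nat.dist, ↓reduceIte]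
      omega
    · refine ⟨.spine w hw ⟨k w - 1, by omega⟩,
        adj_of_rel (by simp) (.attSpineLast w hw hcw h0), ?_⟩
      simp only [leafPotential, spineDepth, Nat.dist, ↓reduceIte]
      omega
  · refine ⟨.lpole w hw hcw (decide (j ≤ k w - 1 - j)),
      (adj_of_rel (by simp) (.lpoleAtt w hw hcw _)).symm, ?_⟩
    by_cases hjk : j ≤ k w - 1 - j <;>
      simp only [leafPotential, spineDepth, hcw, hjk, ↓reduceIte, decide_true, decide_false,
        Bool.false_eq_true, Bool.toNat_true] <;> omega

theorem exists_adj_leafPotential_lt_of_base_eq (hw : TreeLeaf T w) (j : Fin (k w))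
    {v : APV U T c k} (hv : v.base = w) (hvj : v ≠ .leafv w hw j) :
    ∃ v', (APGraph T c k nu).Adj v v' ∧
      leafPotential T c k nu w j v' < leafPotential T c k nu w j v := by
  obtain ⟨j, hj⟩ := j
  cases v with
  | plain z hz | gv z hz | pole z hz => exact absurd hw (hv ▸ hz)
  | lpole z hz hcz b =>
    obtain rfl : w = z := hv.symm
    exact exists_adj_leafPotential_lt_lpole_self hz hcz hj b
  | att z hz =>
    obtain rfl : w = z := hv.symm
    exact exists_adj_leafPotential_lt_att_self hz hj
  | spine z hz i =>
    obtain rfl : w = z := hv.symm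
    by_cases hij : (i : ℕ) = j
    · obtain rfl : i = ⟨j, hj⟩ := Fin.ext hij
      refine ⟨.leafv w hz ⟨j, hj⟩, (adj_of_rel (by simp) (.leafSpine w hz _)).symm, ?_⟩
      simp [leafPotential]
    · obtain ⟨i', hadj, hi'⟩ := exists_adj_spine (nu := nu) hz i hj hij
      refine ⟨.spine w hz i', hadj, ?_⟩
      simp only [leafPotential, ↓reduceIte]
      omega
  | leafv z hz i =>
    obtain rfl : w = z := hv.symm
    have hij : (i : ℕ) ≠ j := by
      rintro rfl
      exact hvj rfl
    refine ⟨.spine w hz i, adj_of_rel (by simp) (.leafSpine w hz i), ?_⟩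
    simp only [leafPotential, hij, ↓reduceIte]
    omega

theorem exists_adj_leafPotential_lt_spine_of_ne {z : U} (hzw : z ≠ w) (hz : TreeLeaf T z)
    (i : Fin (k z)) (j : ℕ) :
    ∃ v', (APGraph T c k nu).Adj (.spine z hz i) v' ∧
      leafPotential T c k nu w j v' < leafPotential T c k nu w j (.spine z hz i) := by
  obtain ⟨i, hi⟩ := i
  have h0 : 0 < k z := by omega
  have hend : i = 0 ∨ i = k z - 1 →
      ∃ v', (APGraph T c k nu).Adj (.spine z hz ⟨i, hi⟩) v' ∧
        leafPotential T c k nu w j v' ≤ 2 * T.dist z w + spineDepth k w j + 2 := by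
    rintro (rfl | rfl) <;> cases hcz : c z
    · exact ⟨.att z hz, (adj_of_rel (by simp) (.attSpineFirst z hz hcz h0)).symm,
        by simp [leafPotential, hzw]⟩
    · exact ⟨.lpole z hz hcz true, (adj_of_rel (by simp) (.lpoleSpineFirst z hz hcz h0)).symm,
        by simp [leafPotential, hzw]⟩
    · exact ⟨.att z hz, (adj_of_rel (by simp) (.attSpineLast z hz hcz h0)).symm,
        by simp [leafPotential, hzw]⟩
    · exact ⟨.lpole z hz hcz false, (adj_of_rel (by simp) (.lpoleSpineLast z hz hcz h0)).symm,
        by simp [leafPotential, hzw]⟩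
  have hval : leafPotential T c k nu w j (.spine z hz ⟨i, hi⟩) =
      2 * T.dist z w + spineDepth k w j + spineDepth k z i + 3 := by
    simp only [leafPotential, hzw, ↓reduceIte]
  rw [hval]
  by_cases hi0 : i = 0 ∨ i = k z - 1
  · obtain ⟨v', hadj, hv'⟩ := hend hi0
    exact ⟨v', hadj, by omega⟩
  · obtain ⟨i', hadj, hi'⟩ := exists_adj_spine (nu := nu) hz ⟨i, hi⟩
      (m := if i ≤ k z - 1 - i then 0 else k z - 1) (by split_ifs <;> omega)
      (by split_ifs <;> simp only <;> omega)
    refine ⟨.spine z hz i', hadj, ?_⟩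
    simp only [leafPotential, spineDepth, hzw, ↓reduceIte]
    split_ifs at hi' <;> simp only [Nat.dist] at hi' <;> omega

theorem exists_adj_leafPotential_lt_of_base_ne (hT : T.Connected)
    (hc : ∀ u w, T.Adj u w → c u ≠ c w) (hnu : ∀ u, Set.InjOn (nu u) {x | T.Adj u x})
    (hw : TreeLeaf T w) (j : ℕ) {v : APV U T c k} (hv : v.base ≠ w) :
    ∃ v', (APGraph T c k nu).Adj v v' ∧
      leafPotential T c k nu w j v' < leafPotential T c k nu w j v := by
  cases v with
  | plain z hz hcz =>
    obtain ⟨y, hzy, hd⟩ := hT.exists_adj_dist_add_one (show z ≠ w from hv)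
    refine ⟨APport T c k nu y z, APport_of_red hz hcz y ▸ adj_APport hzy, ?_⟩
    have := leafPotential_APport_of_farther (c := c) (k := k) hT hnu hw j hzy.symm hd
    have := Bool.toNat_le (c y)
    show _ < 2 * T.dist z w + spineDepth k w j + 2
    omega
  | gv z hz hcz i =>
    by_cases hi : PointsToward T nu w z i
    · have hval : leafPotential T c k nu w j (.gv z hz hcz i) =
          2 * T.dist z w + spineDepth k w j + 1 := if_pos hi
      obtain ⟨y, hzy, hlt, rfl⟩ := hi
      have hd : T.dist z w = T.dist y w + 1 := by
        have := hT.dist_eq_add_one_or_of_adj (Coloring.mk c fun h => hc _ _ h) hzy w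
        omega
      refine ⟨APport T c k nu y z, APport_of_black hz hcz y ▸ adj_APport hzy, ?_⟩
      have := leafPotential_APport_of_farther (c := c) (k := k) hT hnu hw j hzy.symm hd
      have := Bool.toNat_add_toNat_of_ne (hc z y hzy)
      rw [hcz, Bool.toNat_true] at this
      omega
    · have hval : leafPotential T c k nu w j (.gv z hz hcz i) =
          2 * T.dist z w + spineDepth k w j + 3 := if_neg hi
      refine ⟨.pole z hz hcz true, (adj_of_rel (by simp) (.poleGv z hz hcz true i)).symm, ?_⟩
      show 2 * T.dist z w + spineDepth k w j + 2 < _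
      omega
  | pole z hz hcz b =>
    obtain ⟨y, hzy, hd⟩ := hT.exists_adj_dist_add_one (show z ≠ w from hv)
    have hi : PointsToward T nu w z (nu z y) := ⟨y, hzy, by omega, rfl⟩
    have hval : leafPotential T c k nu w j (.gv z hz hcz (nu z y)) =
        2 * T.dist z w + spineDepth k w j + 1 := if_pos hi
    refine ⟨.gv z hz hcz (nu z y), adj_of_rel (by simp) (.poleGv z hz hcz b _), ?_⟩
    show _ < 2 * T.dist z w + spineDepth k w j + 2
    omega
  | lpole z hz hcz b =>
    refine ⟨.att z hz, adj_of_rel (by simp) (.lpoleAtt z hz hcz b), ?_⟩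
    simp only [leafPotential, show z ≠ w from hv, hcz, ↓reduceIte, Bool.toNat_true]
    omega
  | att z hz =>
    have hzw : z ≠ w := hv
    obtain ⟨y, hzy, hd⟩ := hT.exists_adj_dist_add_one hzw
    have hval : leafPotential T c k nu w j (.att z hz) =
        2 * T.dist z w + spineDepth k w j + 2 - (c z).toNat := if_neg hzw
    refine ⟨APport T c k nu y z, APport_of_leaf hz y ▸ adj_APport hzy, ?_⟩
    have := leafPotential_APport_of_farther (c := c) (k := k) hT hnu hw j hzy.symm hd
    have := Bool.toNat_add_toNat_of_ne (hc z y hzy)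
    omega
  | spine z hz i => exact exists_adj_leafPotential_lt_spine_of_ne hv hz i j
  | leafv z hz i =>
    refine ⟨.spine z hz i, adj_of_rel (by simp) (.leafSpine z hz i), ?_⟩
    simp only [leafPotential, show z ≠ w from hv, ↓reduceIte]
    omega

theorem dist_leafv_eq_leafPotential (hT : T.Connected) (hc : ∀ u w, T.Adj u w → c u ≠ c w)
    (hnu : ∀ u, Set.InjOn (nu u) {x | T.Adj u x}) (hw : TreeLeaf T w) (hkw : k w ≤ 3)
    (j : Fin (k w)) (v : APV U T c k) :
    (APGraph T c k nu).dist v (.leafv w hw j) = leafPotential T c k nu w j v := by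
  refine dist_eq_of_le_add_one_of_descent (fun a b hab => ?_) (fun v hv => ?_) ?_ v
  · obtain ⟨-, h | h⟩ := (fromRel_adj _ _ _).1 hab
    · exact (leafPotential_le_of_APRel hT hc hnu hw hkw j.2 h).1
    · exact (leafPotential_le_of_APRel hT hc hnu hw hkw j.2 h).2
  · by_cases hbase : v.base = w
    · exact exists_adj_leafPotential_lt_of_base_eq hw j hbase hv
    · exact exists_adj_leafPotential_lt_of_base_ne hT hc hnu hw j hbase
  · simp [leafPotential]

end AltPath

theorem similar_altpath_same_dist_general {U : Type} (T : SimpleGraph U)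
    (hconn : T.Connected)
    (c : U → Bool) (hc : ∀ u w : U, T.Adj u w → c u ≠ c w)
    (k : U → ℕ) (hk : ∀ u : U, TreeLeaf T u → k u = 2 ∨ k u = 3)
    (nu nu' : U → U → Fin 3)
    (hnu : ∀ u : U, Set.InjOn (nu u) {w | T.Adj u w})
    (hnu' : ∀ u : U, Set.InjOn (nu' u) {w | T.Adj u w}) :
    ∀ (u w : U) (hu : TreeLeaf T u) (hw : TreeLeaf T w)
      (i : Fin (k u)) (j : Fin (k w)),
      (APGraph T c k nu).dist (.leafv u hu i) (.leafv w hw j) =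
        (APGraph T (fun z => !c z) k nu').dist (.leafv u hu i) (.leafv w hw j) := by
  intro u w hu hw i j
  have hkw : k w ≤ 3 := by rcases hk w hw with h | h <;> omega
  have hc' : ∀ u w, T.Adj u w → (!c u) ≠ (!c w) := fun u w h => by simpa using hc u w h
  rw [dist_leafv_eq_leafPotential hconn hc hnu hw hkw,
    dist_leafv_eq_leafPotential hconn hc' hnu' hw hkw]
  -- at a leaf vertex the potential mentions neither the colouring nor the ports
  rfl

/-- two similar alt-path structures of the same binary tree `T`
realize the same shortest distance matrix on corresponding leaves. -/
theorem similar_altpath_same_dist {U : Type} (T : SimpleGraph U)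
    (hconn : T.Connected) (hacyc : T.IsAcyclic)
    (hdeg : ∀ u : U, gdeg T u = 1 ∨ gdeg T u = 3)
    (hleaves : ∃ u w : U, u ≠ w ∧ TreeLeaf T u ∧ TreeLeaf T w)
    (c : U → Bool) (hc : ∀ u w : U, T.Adj u w → c u ≠ c w)
    (k : U → ℕ) (hk : ∀ u : U, TreeLeaf T u → k u = 2 ∨ k u = 3)
    (nu nu' : U → U → Fin 3)
    (hnu : ∀ u : U, Set.InjOn (nu u) {w | T.Adj u w})
    (hnu' : ∀ u : U, Set.InjOn (nu' u) {w | T.Adj u w}) :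
    ∀ (u w : U) (hu : TreeLeaf T u) (hw : TreeLeaf T w)
      (i : Fin (k u)) (j : Fin (k w)),
      (APGraph T c k nu).dist (.leafv u hu i) (.leafv w hw j) =
        (APGraph T (fun z => !c z) k nu').dist (.leafv u hu i) (.leafv w hw j) :=
  similar_altpath_same_dist_general T hconn c hc k hk nu nu' hnu hnu'
end

section
/- Let N be a binary unrooted phylogenetic network on X containing a bad pendant blob with three leaves a_1,a_2,a_3 attached consecutively along one side, and let N' be obtained by deleting the leaf a_2 (and suppressing the resulting degree-2 vertex). Then d^{N'}_m(x,y) = d^N_m(x,y) for all leaf pairs {x,y} ⊆ X − {a_2} with {x,y} ≠ {a_1,a_3}, and d^{N'}_m(a_1,a_3) = 3. -/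
open SimpleGraph

/-!
Both inequalities come from maps that collapse a few vertices onto `w`: such a map sends
adjacent vertices to adjacent or equal ones, because `w` is adjacent to every vertex the
collapsed set borders, and hence does not increase distances. Sending `a₂` and `v₂` to `w` maps
`N` into `N'` (the path `v₁ v₂ v₃` becomes `v₁ w v₃`) and fixes the remaining leaves, so
`d^{N'} ≤ d^N`. Sending `a₁` and `v₁` to `w` maps `N'` into `N` (the new edge `v₁ v₃` becomes
`w v₃`) and fixes every leaf other than `a₁`; symmetrically for `a₃` and `v₃`. A pair other than
`{a₁, a₃}` avoids `a₁` or `a₃`, which gives `d^N ≤ d^{N'}`. In `N'` the leaves `a₁` and `a₃` hang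
off the adjacent vertices `v₁` and `v₃`, so they are at distance 3.
-/

namespace SimpleGraph

variable {V W : Type*} {G : SimpleGraph V} {H : SimpleGraph W}

theorem Walk.exists_length_le_of_adj_imp (f : V → W)
    (hf : ∀ u v, G.Adj u v → f u = f v ∨ H.Adj (f u) (f v)) :
    ∀ {u v : V} (p : G.Walk u v), ∃ q : H.Walk (f u) (f v), q.length ≤ p.length
  | _, _, .nil => ⟨.nil, le_rfl⟩
  | _, _, .cons h p => by
    obtain ⟨q, hq⟩ := exists_length_le_of_adj_imp f hf p
    rcases hf _ _ h with heq | hadj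
    · exact ⟨q.copy heq.symm rfl, by rw [length_copy, length_cons]; omega⟩
    · exact ⟨.cons hadj q, by rw [length_cons, length_cons]; omega⟩

theorem Reachable.dist_le_of_adj_imp (f : V → W)
    (hf : ∀ u v, G.Adj u v → f u = f v ∨ H.Adj (f u) (f v)) {u v : V} (h : G.Reachable u v) :
    H.dist (f u) (f v) ≤ G.dist u v := by
  obtain ⟨p, hp⟩ := h.exists_walk_length_eq_dist
  obtain ⟨q, hq⟩ := p.exists_length_le_of_adj_imp f hf
  exact (dist_le q).trans (hp ▸ hq)

theorem Reachable.dist_le_of_collapse (f : V → W) (T : Set V) (w : W) (hT : ∀ u ∈ T, f u = w)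
    (hout : ∀ u v, G.Adj u v → u ∉ T → v ∉ T → H.Adj (f u) (f v))
    (hbd : ∀ u v, G.Adj u v → u ∈ T → v ∉ T → w = f v ∨ H.Adj w (f v))
    {u v : V} (h : G.Reachable u v) : H.dist (f u) (f v) ≤ G.dist u v := by
  refine h.dist_le_of_adj_imp f fun u v huv => ?_
  by_cases hu : u ∈ T <;> by_cases hv : v ∈ T
  · exact .inl ((hT u hu).trans (hT v hv).symm)
  · exact hT u hu ▸ hbd u v huv hu hv
  · rw [hT v hv, eq_comm, adj_comm]
    exact hbd v u huv.symm hv hu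
  · exact .inr (hout u v huv hu hv)

theorem dist_eq_three_of_adj_unique {a b u v : V} (hau : G.Adj a u) (huv : G.Adj u v)
    (hvb : G.Adj v b) (ha : ∀ t, G.Adj a t → t = u) (hb : ∀ t, G.Adj b t → t = v)
    (hav : a ≠ v) : G.dist a b = 3 := by
  let p : G.Walk a b := .cons hau (.cons huv (.cons hvb .nil))
  refine le_antisymm (dist_le p) ?_
  have hne : a ≠ b := by
    rintro rfl
    exact huv.ne (hb u hau)
  have hnadj : ¬G.Adj a b := fun h => hav (hb a h.symm)
  have hcommon : G.commonNeighbors a b = ∅ := by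
    ext t
    simp only [mem_commonNeighbors, Set.mem_empty_iff_false, iff_false, not_and]
    exact fun hat hbt => huv.ne ((ha t hat).symm.trans (hb t hbt))
  have h := two_lt_edist_iff.mpr ⟨hne, hnadj, hcommon⟩
  rw [← p.reachable.coe_dist_eq_edist] at h
  exact_mod_cast h

end SimpleGraph

namespace PhyloNet

open SimpleGraph

variable {V X : Type} {N : PhyloNet V X}

theorem eq_of_adj_leaf {x : X} {u u' : V} (hu : N.G.Adj (N.leaf x) u)
    (hu' : N.G.Adj (N.leaf x) u') : u = u' := by
  obtain ⟨c, hc⟩ := Set.ncard_eq_one.mp (N.leafDeg x)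
  have hu : u ∈ ({c} : Set V) := hc ▸ hu
  have hu' : u' ∈ ({c} : Set V) := hc ▸ hu'
  exact hu.trans hu'.symm

theorem leaf_ne_of_adj_of_adj {v u u' : V} (hu : N.G.Adj v u) (hu' : N.G.Adj v u')
    (hne : u ≠ u') (x : X) : N.leaf x ≠ v := by
  rintro rfl
  exact hne (eq_of_adj_leaf hu hu')

theorem dist_le_of_delete_leaf {S : Set V} {G' : SimpleGraph S} {a2 : X} {v1 v2 v3 w : V}
    (hS : Sᶜ = {N.leaf a2, v2}) (hw : w ∈ S) (hwv1 : N.G.Adj w v1) (hwv3 : N.G.Adj w v3)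
    (hl2 : N.G.Adj (N.leaf a2) v2) (hc2 : ∀ u, N.G.Adj v2 u → u = v1 ∨ u = v3 ∨ u = N.leaf a2)
    (hle : ∀ p q : S, N.G.Adj p q → G'.Adj p q) (p q : S) : G'.dist p q ≤ N.G.dist p q := by
  classical
  let r : V → S := fun u => if hu : u ∈ S then ⟨u, hu⟩ else ⟨w, hw⟩
  have hr : ∀ {u} (hu : u ∈ S), r u = ⟨u, hu⟩ := fun hu => dif_pos hu
  have hkept : ∀ {u}, u ∈ S → u ≠ N.leaf a2 ∧ u ≠ v2 := fun {u} hu => by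
    have : u ∉ Sᶜ := not_not.mpr hu
    simpa [hS, not_or] using this
  have h := (N.conn p q).dist_le_of_collapse r Sᶜ ⟨w, hw⟩ (fun u hu => dif_neg hu)
    (fun u v huv hu hv => by
      rw [Set.notMem_compl_iff] at hu hv
      rw [hr hu, hr hv]
      exact hle _ _ huv)
    (fun u v huv hu hv => by
      rw [Set.notMem_compl_iff] at hv
      rw [hr hv]
      obtain rfl | rfl := hS ▸ hu
      · exact absurd (eq_of_adj_leaf huv hl2) (hkept hv).2
      · rcases hc2 v huv with rfl | rfl | rfl
        · exact .inr (hle ⟨w, hw⟩ _ hwv1)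
        · exact .inr (hle ⟨w, hw⟩ _ hwv3)
        · exact absurd rfl (hkept hv).1)
  rwa [hr p.2, hr q.2] at h

theorem dist_le_of_shortcut {S : Set V} {G' : SimpleGraph S} {a : X} {v v' v2 w : V}
    (hv2 : v2 ∉ S) (hl : N.G.Adj (N.leaf a) v)
    (hc : ∀ u, N.G.Adj v u → u = w ∨ u = v2 ∨ u = N.leaf a) (hwv' : N.G.Adj w v')
    (hAdj : ∀ p q : S, G'.Adj p q ↔ N.G.Adj p q ∨ (p.1 = v ∧ q.1 = v') ∨ (p.1 = v' ∧ q.1 = v))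
    {p q : S} (hp : p.1 ∉ ({v, N.leaf a} : Set V)) (hq : q.1 ∉ ({v, N.leaf a} : Set V))
    (h : G'.Reachable p q) : N.G.dist p q ≤ G'.dist p q := by
  classical
  set T : Set V := {v, N.leaf a}
  let f : S → V := fun s => if s.1 ∈ T then w else s.1
  have hf : ∀ {s : S}, s.1 ∉ T → f s = s := fun hs => if_neg hs
  have h := h.dist_le_of_collapse f {s | s.1 ∈ T} w (fun s hs => if_pos hs)
    (fun s t hst hs ht => by
      rw [hf hs, hf ht]
      rcases (hAdj s t).mp hst with hst | ⟨hs', -⟩ | ⟨-, ht'⟩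
      · exact hst
      · exact absurd (.inl hs') hs
      · exact absurd (.inl ht') ht)
    (fun s t hst hs ht => by
      rw [hf ht]
      rcases (hAdj s t).mp hst with hst | ⟨-, ht'⟩ | ⟨-, ht'⟩
      · rcases hs with hs | hs
        · rw [hs] at hst
          rcases hc t hst with ht' | ht' | ht'
          · exact .inl ht'.symm
          · exact absurd (ht' ▸ t.2) hv2
          · exact absurd (.inr ht') ht
        · rw [hs] at hst
          exact absurd (.inl (eq_of_adj_leaf hst hl)) ht
      · exact .inr (ht' ▸ hwv')
      · exact absurd (.inl ht') ht)
  rwa [hf hp, hf hq] at h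

theorem dist_eq_three_of_shortcut {S : Set V} {G' : SimpleGraph S} {a1 a3 : X} {v1 v3 : V}
    (hv1 : ∀ x, N.leaf x ≠ v1) (hv3 : ∀ x, N.leaf x ≠ v3) (hv1S : v1 ∈ S) (hv3S : v3 ∈ S)
    (hl1 : N.G.Adj (N.leaf a1) v1) (hl3 : N.G.Adj (N.leaf a3) v3)
    (hAdj : ∀ p q : S, G'.Adj p q ↔ N.G.Adj p q ∨ (p.1 = v1 ∧ q.1 = v3) ∨ (p.1 = v3 ∧ q.1 = v1))
    {p q : S} (hp : p.1 = N.leaf a1) (hq : q.1 = N.leaf a3) : G'.dist p q = 3 := by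
  have hleafAdj : ∀ {s t : S} {x : X}, s.1 = N.leaf x → G'.Adj s t → N.G.Adj (N.leaf x) t := by
    intro s t x hs h
    rcases (hAdj s t).1 h with h | ⟨h, -⟩ | ⟨h, -⟩
    · rwa [hs] at h
    · exact absurd (hs.symm.trans h) (hv1 x)
    · exact absurd (hs.symm.trans h) (hv3 x)
  exact dist_eq_three_of_adj_unique (u := ⟨v1, hv1S⟩) (v := ⟨v3, hv3S⟩)
    ((hAdj _ _).2 (.inl (hp ▸ hl1))) ((hAdj _ _).2 (.inr (.inl ⟨rfl, rfl⟩)))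
    ((hAdj _ _).2 (.inl (hq ▸ hl3.symm)))
    (fun t ht => Subtype.ext (eq_of_adj_leaf (hleafAdj hp ht) hl1))
    (fun t ht => Subtype.ext (eq_of_adj_leaf (hleafAdj hq ht) hl3))
    (fun h => hv3 a1 (hp ▸ congrArg Subtype.val h))

end PhyloNet

theorem bad_blob_delete_middle_leaf_general {V X : Type} (N : PhyloNet V X)
    (a1 a2 a3 : X) (v1 v2 v3 w : V)
    (ha13 : a1 ≠ a3)
    (hv12 : v1 ≠ v2) (hv13 : v1 ≠ v3) (hv23 : v2 ≠ v3)
    (hv2w : v2 ≠ w)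
    (hwv1 : N.G.Adj w v1) (hv1v2 : N.G.Adj v1 v2)
    (hv2v3 : N.G.Adj v2 v3) (hv3w' : N.G.Adj v3 w)
    (hl1 : N.G.Adj (N.leaf a1) v1) (hl2 : N.G.Adj (N.leaf a2) v2)
    (hl3 : N.G.Adj (N.leaf a3) v3)
    (hc1 : ∀ u : V, N.G.Adj v1 u → u = w ∨ u = v2 ∨ u = N.leaf a1)
    (hc2 : ∀ u : V, N.G.Adj v2 u → u = v1 ∨ u = v3 ∨ u = N.leaf a2)
    (hc3 : ∀ u : V, N.G.Adj v3 u → u = v2 ∨ u = w ∨ u = N.leaf a3)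
    (N' : PhyloNet (↥{p : V | p ≠ N.leaf a2 ∧ p ≠ v2}) {b : X // b ≠ a2})
    (hAdj : ∀ p q : ↥{p : V | p ≠ N.leaf a2 ∧ p ≠ v2},
      N'.G.Adj p q ↔ (N.G.Adj p.1 q.1 ∨ (p.1 = v1 ∧ q.1 = v3) ∨
        (p.1 = v3 ∧ q.1 = v1)))
    (hleaf' : ∀ b : {b : X // b ≠ a2}, (N'.leaf b : V) = N.leaf b.1) :
    (∀ p q : {b : X // b ≠ a2},
      ¬ (p.1 = a1 ∧ q.1 = a3) → ¬ (p.1 = a3 ∧ q.1 = a1) →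
        N'.dm p q = N.dm p.1 q.1) ∧
    (∀ p q : {b : X // b ≠ a2}, p.1 = a1 → q.1 = a3 → N'.dm p q = 3) := by
  have hv1 : ∀ x, N.leaf x ≠ v1 := PhyloNet.leaf_ne_of_adj_of_adj hwv1.symm hv1v2 hv2w.symm
  have hv3 : ∀ x, N.leaf x ≠ v3 := PhyloNet.leaf_ne_of_adj_of_adj hv2v3.symm hv3w' hv2w
  have hw : ∀ x, N.leaf x ≠ w := PhyloNet.leaf_ne_of_adj_of_adj hwv1 hv3w'.symm hv13
  have hle : ∀ p q : {p : V | p ≠ N.leaf a2 ∧ p ≠ v2}, N.G.Adj p q → N'.G.Adj p q :=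
    fun p q h => (hAdj p q).2 (.inl h)
  have hkept : ∀ (b : {b : X // b ≠ a2}) {a : X} {v : V}, b.1 ≠ a → N.leaf b.1 ≠ v →
      (N'.leaf b).1 ∉ ({v, N.leaf a} : Set V) := by
    intro b a v ha hv
    simp [hleaf', hv, N.leafInj.ne ha]
  refine ⟨fun p q h13 h31 => le_antisymm ?_ ?_, fun p q hp hq => ?_⟩
  · have h := PhyloNet.dist_le_of_delete_leaf (G' := N'.G) (by ext; simp [or_iff_not_imp_left])
      ⟨(hw a2).symm, hv2w.symm⟩ hwv1 hv3w'.symm hl2 hc2 hle (N'.leaf p) (N'.leaf q)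
    rwa [hleaf', hleaf'] at h
  · by_cases ha1 : p.1 ≠ a1 ∧ q.1 ≠ a1
    · have h := PhyloNet.dist_le_of_shortcut (fun h => h.2 rfl) hl1 hc1 hv3w'.symm hAdj
        (hkept p ha1.1 (hv1 _)) (hkept q ha1.2 (hv1 _)) (N'.conn _ _)
      rwa [hleaf', hleaf'] at h
    · have ha3 : p.1 ≠ a3 ∧ q.1 ≠ a3 := by
        obtain hp | hq : p.1 = a1 ∨ q.1 = a1 := by tauto
        · exact ⟨hp ▸ ha13, fun hq => h13 ⟨hp, hq⟩⟩
        · exact ⟨fun hp => h31 ⟨hp, hq⟩, hq ▸ ha13⟩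
      have h := PhyloNet.dist_le_of_shortcut (fun h => h.2 rfl) hl3
        (fun u hu => or_left_comm.mp (hc3 u hu)) hwv1
        (fun p q => (hAdj p q).trans (or_congr_right or_comm))
        (hkept p ha3.1 (hv3 _)) (hkept q ha3.2 (hv3 _)) (N'.conn _ _)
      rwa [hleaf', hleaf'] at h
  · exact PhyloNet.dist_eq_three_of_shortcut (G' := N'.G) hv1 hv3 ⟨(hv1 a2).symm, hv12⟩
      ⟨(hv3 a2).symm, hv23.symm⟩ hl1 hl3 hAdj (by rw [hleaf', hp]) (by rw [hleaf', hq])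

/-- distances after deleting the middle leaf `a2` of a bad
pendant level-1 blob (a cycle `w v1 v2 v3` carrying the chain `(a1,a2,a3)`)
and suppressing the resulting degree-2 vertex `v2` (adding the edge `v1 v3`). -/
theorem bad_blob_delete_middle_leaf {V X : Type} (N : PhyloNet V X)
    (a1 a2 a3 : X) (v1 v2 v3 w : V)
    (ha12 : a1 ≠ a2) (ha13 : a1 ≠ a3) (ha23 : a2 ≠ a3)
    (hv12 : v1 ≠ v2) (hv13 : v1 ≠ v3) (hv23 : v2 ≠ v3)
    (hv1w : v1 ≠ w) (hv2w : v2 ≠ w) (hv3w : v3 ≠ w)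
    (hwv1 : N.G.Adj w v1) (hv1v2 : N.G.Adj v1 v2)
    (hv2v3 : N.G.Adj v2 v3) (hv3w' : N.G.Adj v3 w)
    (hl1 : N.G.Adj (N.leaf a1) v1) (hl2 : N.G.Adj (N.leaf a2) v2)
    (hl3 : N.G.Adj (N.leaf a3) v3)
    (hc1 : ∀ u : V, N.G.Adj v1 u → u = w ∨ u = v2 ∨ u = N.leaf a1)
    (hc2 : ∀ u : V, N.G.Adj v2 u → u = v1 ∨ u = v3 ∨ u = N.leaf a2)
    (hc3 : ∀ u : V, N.G.Adj v3 u → u = v2 ∨ u = w ∨ u = N.leaf a3)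
    (hnt : ∃ t : V, N.G.Adj w t ∧ t ≠ v1 ∧ t ≠ v3 ∧ t ∉ Set.range N.leaf)
    (N' : PhyloNet (↥{p : V | p ≠ N.leaf a2 ∧ p ≠ v2}) {b : X // b ≠ a2})
    (hAdj : ∀ p q : ↥{p : V | p ≠ N.leaf a2 ∧ p ≠ v2},
      N'.G.Adj p q ↔ (N.G.Adj p.1 q.1 ∨ (p.1 = v1 ∧ q.1 = v3) ∨
        (p.1 = v3 ∧ q.1 = v1)))
    (hleaf' : ∀ b : {b : X // b ≠ a2}, (N'.leaf b : V) = N.leaf b.1) :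
    (∀ p q : {b : X // b ≠ a2},
      ¬ (p.1 = a1 ∧ q.1 = a3) → ¬ (p.1 = a3 ∧ q.1 = a1) →
        N'.dm p q = N.dm p.1 q.1) ∧
    (∀ p q : {b : X // b ≠ a2}, p.1 = a1 → q.1 = a3 → N'.dm p q = 3) :=
  bad_blob_delete_middle_leaf_general N a1 a2 a3 v1 v2 v3 w ha13 hv12 hv13 hv23 hv2w hwv1 hv1v2
    hv2v3 hv3w' hl1 hl2 hl3 hc1 hc2 hc3 N' hAdj hleaf'
end

section
/- Let N be a binary unrooted phylogenetic network on X containing a pendant level-1 blob B whose attached leaves form exactly the chain a = (a_1,...,a_k), and let N' be obtained by replacing B (including its leaves) by a single new leaf z attached at the endpoint of the non-trivial cut-edge. Then for all leaves p,q ∈ X not in the chain a: d^{N'}_m(p,q) = d^N_m(p,q) and d^{N'}_l(p,q) = d^N_l(p,q); moreover d^{N'}_m(p,z) = d^N_m(p,a) − 2 and d^{N'}_l(p,z) = d^N_l(p,a) − (k+1), where d^N_m(p,a) = min_i d^N_m(p,a_i) and d^N_l(p,a) = max_i d^N_l(p,a_i). -/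
open SimpleGraph

/-!
The attachment vertex `w` is the only exit of the blob `B = {v i} ∪ {a i}`. A path between two
vertices outside `B` therefore never enters `B` (it would have to pass through `w` twice), so
deleting `B` changes neither shortest nor longest distances between them. Every path from `p` to
`a i` is a path from `p` to `w` followed by a path from `w` to `a i` inside the blob; the latter
visits `w`, some of the `v j` and `a i` at most once each, so its length lies between `2` and
`k + 1`, and both bounds are attained: by `w, v (k-1), a (k-1)` and by
`w, v (k-1), …, v 0, a 0`.
-/

/- `sSup` of an unbounded set of naturals is `0`; with truncated subtraction both lemmas still
hold then, which covers infinite networks with unbounded path lengths. -/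

namespace Nat

lemma sSup_sub_le_of_forall_le_add {A B : Set ℕ} {c : ℕ} (hle : ∀ n ∈ B, ∃ m ∈ A, n ≤ m + c)
    (hcofinal : ∀ m ∈ A, ∃ n ∈ B, m ≤ n) : sSup B - c ≤ sSup A := by
  by_cases hA : BddAbove A
  · have hB : sSup A + c ∈ upperBounds B := fun n hn => by
      obtain ⟨m, hm, hnm⟩ := hle n hn
      exact hnm.trans (Nat.add_le_add_right (le_csSup hA hm) c)
    have := csSup_le' hB
    omega
  · have hB : ¬BddAbove B := fun ⟨M, hM⟩ => hA ⟨M, fun m hm => by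
      obtain ⟨n, hn, hmn⟩ := hcofinal m hm
      exact hmn.trans (hM hn)⟩
    simp [Nat.sSup_of_not_bddAbove hB]

lemma le_sSup_sub_of_forall_add_mem {A B : Set ℕ} {c : ℕ} (hA : A.Nonempty)
    (hle : ∀ n ∈ B, ∃ m ∈ A, n ≤ m + c) (hadd : ∀ m ∈ A, m + c ∈ B) : sSup A ≤ sSup B - c := by
  by_cases hAb : BddAbove A
  · have hB : BddAbove B := ⟨sSup A + c, fun n hn => by
      obtain ⟨m, hm, hnm⟩ := hle n hn
      exact hnm.trans (Nat.add_le_add_right (le_csSup hAb hm) c)⟩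
    have := le_csSup hB (hadd _ (Nat.sSup_mem hA hAb))
    omega
  · simp [Nat.sSup_of_not_bddAbove hAb]

end Nat

namespace SimpleGraph

variable {V : Type} {G : SimpleGraph V}

lemma eq_of_adj_of_gdeg_eq_one {x u u' : V} (hx : gdeg G x = 1) (hu : G.Adj x u)
    (hu' : G.Adj x u') : u = u' := by
  obtain ⟨b, hb⟩ := Set.ncard_eq_one.mp hx
  have hu : u ∈ {u | G.Adj x u} := hu
  have hu' : u' ∈ {u | G.Adj x u} := hu'
  rw [hb] at hu hu'
  exact hu.trans hu'.symm

def pathLengths (G : SimpleGraph V) (x y : V) : Set ℕ :=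
  {n | ∃ p : G.Walk x y, p.IsPath ∧ p.length = n}

namespace Walk

lemma IsPath.length_lt_card_of_support_subset [DecidableEq V] {x y : V} {p : G.Walk x y}
    (hp : p.IsPath) {s : Finset V} (hs : ∀ z ∈ p.support, z ∈ s) : p.length < s.card :=
  calc p.length < p.support.length := by rw [length_support]; omega
    _ = p.support.toFinset.card := (List.toFinset_card_of_nodup hp.support_nodup).symm
    _ ≤ s.card := Finset.card_le_card fun z hz => hs z (List.mem_toFinset.mp hz)

lemma IsPath.append_of_support_inter {x y w : V} {p : G.Walk x w} {q : G.Walk w y}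
    (hp : p.IsPath) (hq : q.IsPath) (h : ∀ z ∈ p.support, z ∈ q.support → z = w) :
    (p.append q).IsPath := by
  rw [isPath_def, support_append, List.nodup_append]
  refine ⟨hp.support_nodup, hq.support_nodup.sublist q.support.tail_sublist, ?_⟩
  rintro z hzp _ hzq rfl
  have hw : w ∉ q.support.tail := by
    have := hq.support_nodup
    rw [← q.cons_tail_support] at this
    exact (List.nodup_cons.mp this).1
  exact hw (h z hzp (List.mem_of_mem_tail hzq) ▸ hzq)

lemma length_induce {S : Set V} {x y : V} (p : G.Walk x y) (h : ∀ z ∈ p.support, z ∈ S) :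
    (p.induce S h).length = p.length := by
  induction p <;> simp [*]

end Walk

def IsPathClosed (G : SimpleGraph V) (S : Set V) : Prop :=
  ∀ ⦃x y : V⦄ (p : G.Walk x y), p.IsPath → x ∈ S → y ∈ S → ∀ z ∈ p.support, z ∈ S

namespace IsPathClosed

variable {S : Set V} (hS : G.IsPathClosed S) {x y : V} (hx : x ∈ S) (hy : y ∈ S)
include hS hx hy

lemma pathLengths_induce :
    (G.induce S).pathLengths ⟨x, hx⟩ ⟨y, hy⟩ = G.pathLengths x y := by
  ext n
  constructor
  · rintro ⟨q, hq, rfl⟩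
    exact ⟨q.map (Embedding.induce S).toHom, hq.map Subtype.val_injective, q.length_map _⟩
  · rintro ⟨p, hp, rfl⟩
    have hmap := p.map_induce (hS p hp hx hy)
    exact ⟨_, Walk.IsPath.of_map (hmap ▸ hp), p.length_induce _⟩

lemma ldistV_induce : ldistV (G.induce S) ⟨x, hx⟩ ⟨y, hy⟩ = ldistV G x y :=
  congrArg sSup (hS.pathLengths_induce hx hy)

lemma dist_induce (hxy : G.Reachable x y) :
    (G.induce S).dist ⟨x, hx⟩ ⟨y, hy⟩ = G.dist x y := by
  obtain ⟨p, hp, hpd⟩ := hxy.exists_path_of_dist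
  have hsub := hS p hp hx hy
  refine le_antisymm (hpd ▸ p.length_induce hsub ▸ dist_le _) ?_
  have hreach : (G.induce S).Reachable ⟨x, hx⟩ ⟨y, hy⟩ := ⟨p.induce S hsub⟩
  obtain ⟨q, hq⟩ := hreach.exists_walk_length_eq_dist
  exact hq ▸ (q.length_map (Embedding.induce S).toHom) ▸ dist_le _

end IsPathClosed

def IsSoleExit (G : SimpleGraph V) (B : Set V) (w : V) : Prop :=
  ∀ ⦃x y : V⦄, x ∈ B → G.Adj x y → y ∉ B → y = w

namespace IsSoleExit

variable {B : Set V} {w : V} (h : G.IsSoleExit B w)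
include h

lemma mem_support {x y : V} (p : G.Walk x y) (hx : x ∉ B) (hy : y ∈ B) : w ∈ p.support := by
  obtain ⟨d, hd, hout, hin⟩ := p.exists_boundary_dart Bᶜ hx (not_not.mpr hy)
  rw [← h (not_not.mp hin) d.adj.symm hout]
  exact p.dart_fst_mem_support_of_mem_darts hd

lemma isPathClosed_compl : G.IsPathClosed Bᶜ := by
  intro x y p hp hx hy
  induction p with
  | nil => simpa using hx
  | @cons x u y hxu q ih =>
    rw [Walk.cons_isPath_iff] at hp
    by_cases hu : u ∈ B
    · have hxw : x = w := h hu hxu.symm hx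
      have := h.mem_support q.reverse hy hu
      rw [Walk.support_reverse, List.mem_reverse, ← hxw] at this
      exact absurd this hp.2
    · intro z hz
      rcases List.mem_cons.mp hz with rfl | hz
      exacts [hx, ih hp.1 hu hy z hz]

end IsSoleExit

section CutVertex

variable {x y w : V} (hw : ∀ p : G.Walk x y, w ∈ p.support)
include hw

lemma exists_add_of_mem_pathLengths {n : ℕ} (hn : n ∈ G.pathLengths x y) :
    ∃ m ∈ G.pathLengths x w, ∃ m' ∈ G.pathLengths w y, n = m + m' := by
  classical
  obtain ⟨p, hp, rfl⟩ := hn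
  have hsplit := congrArg Walk.length (p.take_spec (hw p))
  rw [Walk.length_append] at hsplit
  exact ⟨_, ⟨_, hp.takeUntil _, rfl⟩, _, ⟨_, hp.dropUntil _, rfl⟩, hsplit.symm⟩

lemma dist_eq_add_of_forall_mem_support (hG : G.Connected) :
    G.dist x y = G.dist x w + G.dist w y := by
  classical
  refine le_antisymm hG.dist_triangle ?_
  obtain ⟨p, hp⟩ := hG.exists_walk_length_eq_dist x y
  have hsplit := congrArg Walk.length (p.take_spec (hw p))
  rw [Walk.length_append, hp] at hsplit
  exact hsplit ▸ add_le_add (dist_le _) (dist_le _)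

end CutVertex

end SimpleGraph

/-- A pendant level-1 blob: the cycle `w, v (k-1), …, v 0`, with the leaf `lf i` at `v i`, is
attached to the rest of the graph at `w`. The cycle edge `w — v 0` is allowed by `adj_cases` but
not required. -/
structure IsPendantChain {V : Type} {k : ℕ} (G : SimpleGraph V) (w : V) (v lf : Fin k → V) :
    Prop where
  pos : 0 < k
  injective : Function.Injective v
  attach_ne : ∀ i, w ≠ v i
  attach_ne_leaf : ∀ i, w ≠ lf i
  adj_last : G.Adj w (v ⟨k - 1, Nat.sub_one_lt_of_lt pos⟩)
  adj_succ : ∀ (i : ℕ) (hi : i + 1 < k), G.Adj (v ⟨i, Nat.lt_of_succ_lt hi⟩) (v ⟨i + 1, hi⟩)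
  adj_leaf : ∀ i, G.Adj (lf i) (v i)
  leaf_adj : ∀ i u, G.Adj (lf i) u → u = v i
  adj_cases : ∀ i u, G.Adj (v i) u → u = lf i ∨ u = w ∨ u ∈ Set.range v

namespace IsPendantChain

variable {V : Type} {G : SimpleGraph V} {k : ℕ} {w : V} {v lf : Fin k → V}
  (h : IsPendantChain G w v lf)
include h

lemma leaf_ne (i j : Fin k) : lf i ≠ v j := by
  intro hij
  have hj : ∀ u, G.Adj (v j) u → u = v i := fun u hu => h.leaf_adj i u (hij ▸ hu)
  have hji : lf j = v i := hj _ (h.adj_leaf j).symm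
  have hi : ∀ u, G.Adj (v i) u → u = v j := fun u hu => h.leaf_adj j u (hji ▸ hu)
  have hsucc : ∀ {a b : Fin k}, (∀ u, G.Adj (v a) u → u = v b) → (a : ℕ) + 1 = b := by
    intro a b hab
    by_cases ha : (a : ℕ) + 1 < k
    · exact congrArg Fin.val (h.injective (hab _ (h.adj_succ a ha)))
    · have ha' : a = ⟨k - 1, by omega⟩ := Fin.ext (by simp; omega)
      exact absurd (hab w (ha' ▸ h.adj_last.symm)) (h.attach_ne b)
  have := hsucc hi
  have := hsucc hj
  omega

lemma isSoleExit : G.IsSoleExit (Set.range v ∪ Set.range lf) w := by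
  rintro x y (⟨i, rfl⟩ | ⟨i, rfl⟩) hxy hy
  · rcases h.adj_cases i y hxy with rfl | rfl | hyv
    · exact absurd (Or.inr ⟨i, rfl⟩) hy
    · rfl
    · exact absurd (Or.inl hyv) hy
  · exact absurd (Or.inl ⟨i, (h.leaf_adj i y hxy).symm⟩) hy

lemma exists_path_to_attach (d : ℕ) : ∀ (i : ℕ) (hi : i + d + 1 = k),
    ∃ q : G.Walk (v ⟨i, by omega⟩) w, q.IsPath ∧ q.length = d + 1 ∧
      ∀ z ∈ q.support, z = w ∨ ∃ m : Fin k, i ≤ m ∧ z = v m := by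
  induction d with
  | zero =>
    intro i hi
    obtain rfl : i = k - 1 := by omega
    refine ⟨.cons h.adj_last.symm .nil, ?_, rfl, fun z hz => ?_⟩
    · simpa using (h.attach_ne _).symm
    · simp only [Walk.support_cons, Walk.support_nil, List.mem_cons, List.not_mem_nil,
        or_false] at hz
      rcases hz with rfl | rfl
      exacts [Or.inr ⟨_, le_rfl, rfl⟩, Or.inl rfl]
  | succ d ih =>
    intro i hi
    obtain ⟨q, hq, hlen, hsupp⟩ := ih (i + 1) (by omega)
    refine ⟨.cons (h.adj_succ i (by omega)) q, ?_, by simp [hlen], ?_⟩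
    · refine (Walk.cons_isPath_iff _ _).mpr ⟨hq, fun hmem => ?_⟩
      rcases hsupp _ hmem with hw | ⟨m, hm, hvm⟩
      · exact h.attach_ne _ hw.symm
      · have := congrArg Fin.val (h.injective hvm)
        simp only at this
        omega
    · intro z hz
      rcases List.mem_cons.mp hz with rfl | hz
      · exact Or.inr ⟨_, le_rfl, rfl⟩
      · rcases hsupp z hz with hw | ⟨m, hm, rfl⟩
        exacts [Or.inl hw, Or.inr ⟨m, by omega, rfl⟩]

lemma exists_path_to_leaf (i : Fin k) :
    ∃ q : G.Walk w (lf i), q.IsPath ∧ q.length = k - i + 1 ∧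
      ∀ z ∈ q.support, z = w ∨ z = lf i ∨ z ∈ Set.range v := by
  obtain ⟨q, hq, hlen, hsupp⟩ := h.exists_path_to_attach (k - 1 - i) i (by omega)
  have hlf : lf i ∉ q.support := fun hmem => by
    rcases hsupp _ hmem with hw | ⟨m, -, hm⟩
    exacts [h.attach_ne_leaf i hw.symm, h.leaf_ne i m hm]
  refine ⟨(Walk.cons (h.adj_leaf i) q).reverse,
    ((Walk.cons_isPath_iff _ _).mpr ⟨hq, hlf⟩).reverse, by simp [hlen]; omega, ?_⟩
  intro z hz
  rw [Walk.support_reverse, List.mem_reverse, Walk.support_cons] at hz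
  rcases List.mem_cons.mp hz with rfl | hz
  · exact Or.inr (Or.inl rfl)
  · rcases hsupp z hz with hw | ⟨m, -, rfl⟩
    exacts [Or.inl hw, Or.inr (Or.inr ⟨m, rfl⟩)]

lemma support_subset_of_isPath {x : V} (q : G.Walk x w) (hq : q.IsPath)
    (hx : x ∈ Set.range v) : ∀ z ∈ q.support, z = w ∨ z ∈ Set.range v := by
  induction q with
  | nil => simp
  | @cons x u y hxu q ih =>
    rw [Walk.cons_isPath_iff] at hq
    obtain ⟨j, rfl⟩ := hx
    intro z hz
    rcases List.mem_cons.mp hz with rfl | hz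
    · exact Or.inr ⟨j, rfl⟩
    rcases h.adj_cases j u hxu with rfl | rfl | hu
    · obtain ⟨u', hu', q', rfl⟩ := q.exists_eq_cons_of_ne (h.attach_ne_leaf j).symm
      exact absurd (by rw [← h.leaf_adj j u' hu']; simp) hq.2
    · rw [Walk.nil_iff_support_eq.mp (Walk.isPath_iff_nil.mp hq.1)] at hz
      exact Or.inl (List.mem_singleton.mp hz)
    · exact ih h hq.1 hu z hz

lemma length_le_of_isPath {i : Fin k} {q : G.Walk w (lf i)} (hq : q.IsPath) :
    q.length ≤ k + 1 := by
  classical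
  obtain ⟨u, hu, r, hr⟩ := q.reverse.exists_eq_cons_of_ne (h.attach_ne_leaf i).symm
  obtain rfl := h.leaf_adj i u hu
  have hrp : r.IsPath := (hr ▸ hq.reverse).of_cons
  have hlt := hrp.length_lt_card_of_support_subset (s := insert w (Finset.univ.image v))
    fun z hz => by
      rcases h.support_subset_of_isPath r hrp ⟨i, rfl⟩ z hz with rfl | ⟨m, rfl⟩ <;> simp
  have hcard : (insert w (Finset.univ.image v)).card ≤ k + 1 :=
    (Finset.card_insert_le _ _).trans
      (by simpa using Finset.card_image_le (s := Finset.univ) (f := v))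
  have hlen := congrArg Walk.length hr
  simp only [Walk.length_reverse, Walk.length_cons] at hlen
  omega

lemma two_le_dist_leaf (hG : G.Connected) (i : Fin k) : 2 ≤ G.dist w (lf i) :=
  hG.one_lt_dist_of_ne_of_not_adj (h.attach_ne_leaf i) fun hadj =>
    h.attach_ne i (h.leaf_adj i w hadj.symm)

variable (hG : G.Connected) {x : V} (hx : x ∉ Set.range v ∪ Set.range lf)
include hG hx

lemma iInf_dist_leaf : ⨅ i, G.dist x (lf i) = G.dist x w + 2 := by
  have hsplit (i : Fin k) : G.dist x (lf i) = G.dist x w + G.dist w (lf i) :=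
    dist_eq_add_of_forall_mem_support
      (fun p => h.isSoleExit.mem_support p hx (Or.inr ⟨i, rfl⟩)) hG
  have : Nonempty (Fin k) := ⟨⟨0, h.pos⟩⟩
  refine le_antisymm ?_
    (le_ciInf fun i => hsplit i ▸ Nat.add_le_add_left (h.two_le_dist_leaf hG i) _)
  have hlast : k - 1 < k := by have := h.pos; omega
  obtain ⟨q, -, hlen, -⟩ := h.exists_path_to_leaf ⟨k - 1, hlast⟩
  refine (ciInf_le (OrderBot.bddBelow _) ⟨k - 1, hlast⟩).trans ?_
  have := dist_le q
  simp only at hlen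
  rw [hsplit]
  omega

lemma iSup_ldistV_leaf_sub : (⨆ i, ldistV G x (lf i)) - (k + 1) = ldistV G x w := by
  have hw : w ∉ Set.range v ∪ Set.range lf := by
    rintro (⟨i, hi⟩ | ⟨i, hi⟩)
    exacts [h.attach_ne i hi.symm, h.attach_ne_leaf i hi.symm]
  have hle (i : Fin k) :
      ∀ n ∈ G.pathLengths x (lf i), ∃ m ∈ G.pathLengths x w, n ≤ m + (k + 1) := by
    intro n hn
    obtain ⟨m, hm, _, ⟨q, hq, rfl⟩, rfl⟩ := exists_add_of_mem_pathLengths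
      (fun p => h.isSoleExit.mem_support p hx (Or.inr ⟨i, rfl⟩)) hn
    exact ⟨m, hm, Nat.add_le_add_left (h.length_le_of_isPath hq) m⟩
  have hadd (i : Fin k) :
      ∀ m ∈ G.pathLengths x w, m + (k - i + 1) ∈ G.pathLengths x (lf i) := by
    rintro _ ⟨p, hp, rfl⟩
    obtain ⟨q, hq, hlen, hsupp⟩ := h.exists_path_to_leaf i
    refine ⟨p.append q, hp.append_of_support_inter hq fun z hzp hzq => ?_, by simp [hlen]⟩
    have hz := h.isSoleExit.isPathClosed_compl p hp hx hw z hzp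
    rcases hsupp z hzq with hzw | rfl | hzv
    exacts [hzw, absurd (Or.inr ⟨i, rfl⟩) hz, absurd (Or.inl hzv) hz]
  have : Nonempty (Fin k) := ⟨⟨0, h.pos⟩⟩
  obtain ⟨i₀, hi₀⟩ := exists_eq_ciSup_of_finite (f := fun i => ldistV G x (lf i))
  refine le_antisymm ?_ ?_
  · rw [← hi₀]
    exact Nat.sSup_sub_le_of_forall_le_add (hle i₀)
      fun m hm => ⟨_, hadd i₀ m hm, Nat.le_add_right _ _⟩
  · obtain ⟨p, hp, -⟩ := hG.exists_path_of_dist x w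
    have h₀ : ldistV G x w ≤ ldistV G x (lf ⟨0, h.pos⟩) - (k + 1) :=
      Nat.le_sSup_sub_of_forall_add_mem (B := G.pathLengths x (lf ⟨0, h.pos⟩))
        ⟨_, p, hp, rfl⟩ (hle _) (hadd _)
    exact h₀.trans (Nat.sub_le_sub_right
      (le_ciSup (f := fun i => ldistV G x (lf i)) (Set.finite_range _).bddAbove _) _)

end IsPendantChain

/-- The leaf `z` is the vertex `w`, a leaf of the subgraph induced on the complement of the
blob. -/
theorem replace_pendant_level1_blob_dist {V X : Type} (N : PhyloNet V X)
    (k : ℕ) (hk : 2 ≤ k)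
    (w : V) (v : Fin k → V) (a : Fin k → X)
    (hvinj : Function.Injective v)
    (hwl : N.G.Adj w (v ⟨k - 1, by omega⟩))
    (hchain : ∀ (i : ℕ) (hi : i + 1 < k),
      N.G.Adj (v ⟨i, by omega⟩) (v ⟨i + 1, hi⟩))
    (hleaf : ∀ i : Fin k, N.G.Adj (N.leaf (a i)) (v i))
    (hclosed : ∀ (i : Fin k) (u : V), N.G.Adj (v i) u →
      u = N.leaf (a i) ∨ (((i : ℕ) = 0 ∨ (i : ℕ) + 1 = k) ∧ u = w) ∨
        ∃ j : Fin k, (((j : ℕ) + 1 = (i : ℕ)) ∨ ((i : ℕ) + 1 = (j : ℕ))) ∧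
          u = v j)
    (hwS : w ∈ {r : V | (∀ i, r ≠ v i) ∧ ∀ i, r ≠ N.leaf (a i)}) :
    ∀ p q : X, (∀ i, p ≠ a i) → (∀ i, q ≠ a i) →
      ∀ (hp : N.leaf p ∈ {r : V | (∀ i, r ≠ v i) ∧ ∀ i, r ≠ N.leaf (a i)})
        (hq : N.leaf q ∈ {r : V | (∀ i, r ≠ v i) ∧ ∀ i, r ≠ N.leaf (a i)}),
        (N.G.induce {r : V | (∀ i, r ≠ v i) ∧ ∀ i, r ≠ N.leaf (a i)}).dist
            ⟨N.leaf p, hp⟩ ⟨N.leaf q, hq⟩ = N.dm p q ∧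
        ldistV (N.G.induce {r : V | (∀ i, r ≠ v i) ∧ ∀ i, r ≠ N.leaf (a i)})
            ⟨N.leaf p, hp⟩ ⟨N.leaf q, hq⟩ = N.dl p q ∧
        (N.G.induce {r : V | (∀ i, r ≠ v i) ∧ ∀ i, r ≠ N.leaf (a i)}).dist
            ⟨N.leaf p, hp⟩ ⟨w, hwS⟩ = (⨅ i : Fin k, N.dm p (a i)) - 2 ∧
        ldistV (N.G.induce {r : V | (∀ i, r ≠ v i) ∧ ∀ i, r ≠ N.leaf (a i)})
            ⟨N.leaf p, hp⟩ ⟨w, hwS⟩ = (⨆ i : Fin k, N.dl p (a i)) - (k + 1) := by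
  have hB : IsPendantChain N.G w v (fun i => N.leaf (a i)) :=
    { pos := by omega
      injective := hvinj
      attach_ne := hwS.1
      attach_ne_leaf := hwS.2
      adj_last := hwl
      adj_succ := hchain
      adj_leaf := hleaf
      leaf_adj := fun i u hu => eq_of_adj_of_gdeg_eq_one (N.leafDeg (a i)) hu (hleaf i)
      adj_cases := fun i u hu => by
        rcases hclosed i u hu with hu | ⟨-, hu⟩ | ⟨j, -, hu⟩
        exacts [Or.inl hu, Or.inr (Or.inl hu), Or.inr (Or.inr ⟨j, hu.symm⟩)] }
  have hS : {r : V | (∀ i, r ≠ v i) ∧ ∀ i, r ≠ N.leaf (a i)} =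
      (Set.range v ∪ Set.range fun i => N.leaf (a i))ᶜ := by
    ext
    simp [eq_comm]
  have hclosedS : N.G.IsPathClosed {r : V | (∀ i, r ≠ v i) ∧ ∀ i, r ≠ N.leaf (a i)} :=
    hS ▸ hB.isSoleExit.isPathClosed_compl
  intro p q _ _ hp hq
  have hp' : N.leaf p ∈ (Set.range v ∪ Set.range fun i => N.leaf (a i))ᶜ := hS ▸ hp
  refine ⟨hclosedS.dist_induce hp hq (N.conn _ _), hclosedS.ldistV_induce hp hq, ?_, ?_⟩
  · rw [hclosedS.dist_induce hp hwS (N.conn _ _)]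
    have := hB.iInf_dist_leaf N.conn hp'
    unfold PhyloNet.dm
    omega
  · rw [hclosedS.ldistV_induce hp hwS]
    exact (hB.iSup_ldistV_leaf_sub N.conn hp').symm
end
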